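/- arXiv:2105.05453 — 3 statements merged into one kernel-verified Lean document; each statement's English description precedes it below -/
import Mathlib

section
/- Lemma 5.7: The ideal 𝓘 + 𝓙 of ℚ[τ] is stable under the 𝔖_n-action, so 𝔖_K acts on A = ℚ[τ]/(𝓘+𝓙), and the image of the homomorphism φ equals the invariant subalgebra A^{𝔖_K}. -/
noncomputable section

open MvPolynomial

namespace PermutohedronA

/-- `𝔉_{A_{n-1}}`: the nonempty proper subsets of `[n]`. -/
abbrev FA (n : ℕ) := {I : Finset (Fin n) // I.Nonempty ∧ I ≠ Finset.univ}

/-- The action of a permutation `w` on `𝔉_{A_{n-1}}`, `I ↦ w(I)`. -/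
def permFA (n : ℕ) (w : Equiv.Perm (Fin n)) (I : FA n) : FA n :=
  ⟨I.1.image w, I.2.1.image w, by
    intro h
    apply I.2.2
    have hc : (I.1.image w).card = I.1.card :=
      Finset.card_image_of_injective _ w.injective
    rw [h, Finset.card_univ] at hc
    exact Finset.eq_univ_of_card _ hc.symm⟩

/-- The ideal `𝓙` generated by products `τ_I τ_J` for incomparable `I, J`. -/
def Jideal (n : ℕ) : Ideal (MvPolynomial (FA n) ℚ) :=
  Ideal.span {p | ∃ I J : FA n, ¬ I.1 ⊆ J.1 ∧ ¬ J.1 ⊆ I.1 ∧ p = X I * X J}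

/-- The linear form `θ_j = Σ_I ([j ∈ I] − [j+1 ∈ I]) τ_I` (0-indexed `j`). -/
def theta (n : ℕ) (j : ℕ) (hj : j + 1 < n) : MvPolynomial (FA n) ℚ :=
  ∑ I : FA n,
    (((if (⟨j, Nat.lt_of_succ_lt hj⟩ : Fin n) ∈ I.1 then (1 : ℚ) else 0) -
      (if (⟨j + 1, hj⟩ : Fin n) ∈ I.1 then (1 : ℚ) else 0)) • X I)

/-- The ideal `𝓘` generated by the linear forms `θ_j`, `j = 1, …, n-1`. -/
def Iideal (n : ℕ) : Ideal (MvPolynomial (FA n) ℚ) :=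
  Ideal.span {p | ∃ j, ∃ hj : j + 1 < n, p = theta n j hj}

/-- The parabolic subgroup `𝔖_K` (0-indexed: `s_k = (k,k+1)` for `k ∈ K`). -/
def SK (n : ℕ) (K : Finset ℕ) (hK : ∀ k ∈ K, k + 1 < n) :
    Subgroup (Equiv.Perm (Fin n)) :=
  Subgroup.closure
    {σ | ∃ k, ∃ hk : k ∈ K,
      σ = Equiv.swap ⟨k, Nat.lt_of_succ_lt (hK k hk)⟩ ⟨k + 1, hK k hk⟩}

open scoped Classical in
/-- The orbit sum `[τ_I] = Σ_{J ∈ 𝔖_K · I} τ_J` (over the distinct members of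
the `𝔖_K`-orbit of `I`). -/
def orbitSum (n : ℕ) (K : Finset ℕ) (hK : ∀ k ∈ K, k + 1 < n) (I : FA n) :
    MvPolynomial (FA n) ℚ :=
  ∑ J ∈ Finset.univ.filter (fun J : FA n => ∃ w ∈ SK n K hK, permFA n w I = J), X J

end PermutohedronA

namespace PermutohedronA

/-- The lower-subset condition defining `𝔉_{A_{n-1}}(K)`. -/
def lowerK (n : ℕ) (K : Finset ℕ) (hK : ∀ k ∈ K, k + 1 < n)
    (I : Finset (Fin n)) : Prop :=
  ∀ (k : ℕ) (hk : k + 1 < n),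
    (∃ w ∈ SK n K hK, w ⟨k, Nat.lt_of_succ_lt hk⟩ = (⟨k + 1, hk⟩ : Fin n)) →
    (⟨k + 1, hk⟩ : Fin n) ∈ I → (⟨k, Nat.lt_of_succ_lt hk⟩ : Fin n) ∈ I

/-- `𝔉_{A_{n-1}}(K)`: nonempty proper subsets satisfying the lower condition. -/
abbrev FAK (n : ℕ) (K : Finset ℕ) (hK : ∀ k ∈ K, k + 1 < n) :=
  {I : Finset (Fin n) // (I.Nonempty ∧ I ≠ Finset.univ) ∧ lowerK n K hK I}

/-- The variables `x_I` (`I ∈ 𝔉_{A_{n-1}}(K)`) and `y_k` (`k ∈ K`). -/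
abbrev VarK (n : ℕ) (K : Finset ℕ) (hK : ∀ k ∈ K, k + 1 < n) :=
  FAK n K hK ⊕ {k : ℕ // k ∈ K}

open MvPolynomial in
open scoped Classical in
/-- The linear form `η_j = Σ_{k ∈ K} c_{jk} y_k + Σ_I ([j∈I] − [j+1∈I]) x_I`,
with `c_{jk} = −2` if `j = k`, `1` if `|j − k| = 1`, `0` otherwise. -/
def etaK (n : ℕ) (K : Finset ℕ) (hK : ∀ k ∈ K, k + 1 < n)
    (j : ℕ) (hj : j + 1 < n) : MvPolynomial (VarK n K hK) ℚ :=
  (∑ k : {k : ℕ // k ∈ K},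
    ((if j = k.1 then (-2 : ℚ)
      else if j + 1 = k.1 ∨ k.1 + 1 = j then (1 : ℚ) else 0)) • X (Sum.inr k)) +
  ∑ I : FAK n K hK,
    (((if (⟨j, Nat.lt_of_succ_lt hj⟩ : Fin n) ∈ I.1 then (1 : ℚ) else 0) -
      (if (⟨j + 1, hj⟩ : Fin n) ∈ I.1 then (1 : ℚ) else 0)) • X (Sum.inl I))

open MvPolynomial in
/-- The ideal `𝓘(K)` generated by the `η_j`. -/
def IKideal (n : ℕ) (K : Finset ℕ) (hK : ∀ k ∈ K, k + 1 < n) :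
    Ideal (MvPolynomial (VarK n K hK) ℚ) :=
  Ideal.span {p | ∃ j, ∃ hj : j + 1 < n, p = etaK n K hK j hj}

open MvPolynomial in
/-- The ideal `𝓙(K)`: products `x_I x_J` for incomparable `I, J ∈ 𝔉(K)` and
products `x_I y_k` when `I` is not `s_k`-invariant. -/
def JKideal (n : ℕ) (K : Finset ℕ) (hK : ∀ k ∈ K, k + 1 < n) :
    Ideal (MvPolynomial (VarK n K hK) ℚ) :=
  Ideal.span
    {p | (∃ I J : FAK n K hK, ¬ I.1 ⊆ J.1 ∧ ¬ J.1 ⊆ I.1 ∧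
            p = X (Sum.inl I) * X (Sum.inl J)) ∨
         (∃ I : FAK n K hK, ∃ k : {k : ℕ // k ∈ K},
            ¬ (I.1.image (Equiv.swap ⟨k.1, Nat.lt_of_succ_lt (hK k.1 k.2)⟩
                ⟨k.1 + 1, hK k.1 k.2⟩) = I.1) ∧
            p = X (Sum.inl I) * X (Sum.inr k))}

end PermutohedronA

namespace PermutohedronA

open MvPolynomial in
open scoped Classical in
/-- The map on variables defining `φ : ℚ[x, y] → A`:
`x_I ↦ [τ_I]` and `y_k ↦ Σ_{I ∈ 𝔉(K)} Σ_{J ∈ 𝔖_K·I} c_k^{I,J} τ_J`, where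
`c_k^{I,J} = |I ∩ [k]| − |J ∩ [k]|`. -/
def phiMap (n : ℕ) (K : Finset ℕ) (hK : ∀ k ∈ K, k + 1 < n) :
    VarK n K hK → (MvPolynomial (FA n) ℚ ⧸ (Iideal n ⊔ Jideal n))
  | Sum.inl I => Ideal.Quotient.mk _ (orbitSum n K hK ⟨I.1, I.2.1⟩)
  | Sum.inr k => Ideal.Quotient.mk _
      (∑ I : FAK n K hK,
        ∑ J ∈ Finset.univ.filter
            (fun J : FA n => ∃ w ∈ SK n K hK, permFA n w ⟨I.1, I.2.1⟩ = J),
          ((((I.1.filter (fun i : Fin n => (i : ℕ) ≤ k.1)).card : ℚ) -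
            ((J.1.filter (fun i : Fin n => (i : ℕ) ≤ k.1)).card : ℚ)) • X J))

end PermutohedronA

set_option synthInstance.maxHeartbeats 1000000
set_option maxHeartbeats 1000000

namespace PermutohedronA

open scoped Classical

variable {n : ℕ}

lemma permFA_mul (v w : Equiv.Perm (Fin n)) (I : FA n) :
    permFA n (v * w) I = permFA n v (permFA n w I) := by
  apply Subtype.ext
  show I.1.image ⇑(v * w) = (I.1.image ⇑w).image ⇑v
  rw [Finset.image_image]
  rfl

lemma permFA_one (I : FA n) : permFA n 1 I = I := by
  apply Subtype.ext
  show I.1.image _ = I.1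
  simp

lemma permFA_inv_cancel (w : Equiv.Perm (Fin n)) (I : FA n) :
    permFA n w⁻¹ (permFA n w I) = I := by
  rw [← permFA_mul, inv_mul_cancel, permFA_one]

lemma permFA_cancel_inv (w : Equiv.Perm (Fin n)) (I : FA n) :
    permFA n w (permFA n w⁻¹ I) = I := by
  rw [← permFA_mul, mul_inv_cancel, permFA_one]

lemma permFA_injective (w : Equiv.Perm (Fin n)) : Function.Injective (permFA n w) :=
  fun I J h => by rw [← permFA_inv_cancel w I, h, permFA_inv_cancel]

lemma mem_permFA {w : Equiv.Perm (Fin n)} {I : FA n} {x : Fin n} :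
    x ∈ (permFA n w I).1 ↔ w⁻¹ x ∈ I.1 := by
  constructor
  · rintro hx
    rcases Finset.mem_image.1 hx with ⟨y, hy, rfl⟩
    simpa using hy
  · intro hx
    exact Finset.mem_image.2 ⟨w⁻¹ x, hx, by simp⟩

/-- `permFA` as an equivalence. -/
def permFAEquiv (w : Equiv.Perm (Fin n)) : FA n ≃ FA n :=
  ⟨permFA n w, permFA n w⁻¹, permFA_inv_cancel w, permFA_cancel_inv w⟩

/-- The generalized linear forms `θ_{a,b}`. -/
def theta' (n : ℕ) (a b : Fin n) : MvPolynomial (FA n) ℚ :=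
  ∑ I : FA n,
    (((if a ∈ I.1 then (1 : ℚ) else 0) - (if b ∈ I.1 then (1 : ℚ) else 0)) • X I)

lemma theta'_self (a : Fin n) : theta' n a a = 0 := by simp [theta']

lemma theta'_trans (a b c : Fin n) : theta' n a c = theta' n a b + theta' n b c := by
  rw [theta', theta', theta', ← Finset.sum_add_distrib]
  apply Finset.sum_congr rfl
  intro I _
  rw [← add_smul]
  ring_nf

lemma theta'_eq_theta (j : ℕ) (hj : j + 1 < n) :
    theta' n ⟨j, Nat.lt_of_succ_lt hj⟩ ⟨j + 1, hj⟩ = theta n j hj := rfl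

lemma theta'_antisymm (a b : Fin n) : theta' n a b = -theta' n b a := by
  have h := theta'_trans a b a
  rw [theta'_self] at h
  linear_combination -h

lemma theta'_mem_of_le : ∀ (m : ℕ) (a b : Fin n), b.1 = a.1 + m →
    theta' n a b ∈ Iideal n := by
  intro m
  induction m with
  | zero =>
    intro a b hb
    have : a = b := Fin.ext (by omega)
    rw [this, theta'_self]
    exact zero_mem _
  | succ m ih =>
    intro a b hb
    have hc : a.1 + m < n := by have := b.2; omega
    set c : Fin n := ⟨a.1 + m, hc⟩ with hcdef
    have h1 : theta' n a b = theta' n a c + theta' n c b := theta'_trans a c b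
    have hj : (a.1 + m) + 1 < n := by have := b.2; omega
    have h2 : theta' n c b ∈ Iideal n := by
      have hbeq : b = (⟨(a.1 + m) + 1, hj⟩ : Fin n) := Fin.ext (by simp; omega)
      have hceq : c = (⟨a.1 + m, Nat.lt_of_succ_lt hj⟩ : Fin n) := Fin.ext rfl
      rw [hbeq, hceq, theta'_eq_theta]
      exact Ideal.subset_span ⟨a.1 + m, hj, rfl⟩
    rw [h1]
    exact add_mem (ih a c rfl) h2

lemma theta'_mem (a b : Fin n) : theta' n a b ∈ Iideal n := by
  rcases le_or_gt a.1 b.1 with h | h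
  · exact theta'_mem_of_le (b.1 - a.1) a b (by omega)
  · rw [theta'_antisymm]
    exact neg_mem (theta'_mem_of_le (a.1 - b.1) b a (by omega))

lemma rename_theta' (w : Equiv.Perm (Fin n)) (a b : Fin n) :
    rename (permFA n w) (theta' n a b) = theta' n (w a) (w b) := by
  rw [theta', theta', map_sum]
  refine Fintype.sum_equiv (permFAEquiv w) _ _ ?_
  intro I
  rw [map_smul, rename_X]
  congr 1
  simp [permFAEquiv, mem_permFA]

lemma ideal_stable (w : Equiv.Perm (Fin n)) {p : MvPolynomial (FA n) ℚ}
    (hp : p ∈ Iideal n ⊔ Jideal n) :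
    rename (permFA n w) p ∈ Iideal n ⊔ Jideal n := by
  rw [Iideal, Jideal, ← Ideal.span_union] at hp
  have h1 : rename (permFA n w) p ∈
      Ideal.map (rename (permFA n w)) (Ideal.span
        ({p | ∃ j, ∃ hj : j + 1 < n, p = theta n j hj} ∪
         {p | ∃ I J : FA n, ¬ I.1 ⊆ J.1 ∧ ¬ J.1 ⊆ I.1 ∧ p = X I * X J})) :=
    Ideal.mem_map_of_mem _ hp
  rw [Ideal.map_span] at h1
  refine Ideal.span_le.2 ?_ h1
  rintro q ⟨r, hr, rfl⟩
  rcases hr with ⟨j, hj, rfl⟩ | ⟨I, J, hIJ, hJI, rfl⟩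
  · refine Ideal.mem_sup_left ?_
    rw [← theta'_eq_theta, rename_theta']
    exact theta'_mem _ _
  · refine Ideal.mem_sup_right ?_
    rw [map_mul, rename_X, rename_X]
    refine Ideal.subset_span ⟨permFA n w I, permFA n w J, ?_, ?_, rfl⟩
    · show ¬ I.1.image w ⊆ J.1.image w
      rwa [Finset.image_subset_image_iff w.injective]
    · show ¬ J.1.image w ⊆ I.1.image w
      rwa [Finset.image_subset_image_iff w.injective]

end PermutohedronA

namespace PermutohedronA

open scoped Classical

variable {n : ℕ} {K : Finset ℕ}

/-- Two points of `[n]` in the same `𝔖_K`-orbit. -/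
def samePt (hK : ∀ k ∈ K, k + 1 < n) (x y : Fin n) : Prop :=
  ∃ w ∈ SK n K hK, w x = y

variable (hK : ∀ k ∈ K, k + 1 < n)

lemma samePt_refl (x : Fin n) : samePt hK x x := ⟨1, one_mem _, rfl⟩

lemma samePt_symm {x y : Fin n} (h : samePt hK x y) : samePt hK y x := by
  obtain ⟨w, hw, rfl⟩ := h
  exact ⟨w⁻¹, inv_mem hw, by simp⟩

lemma samePt_trans {x y z : Fin n} (h : samePt hK x y) (h' : samePt hK y z) :
    samePt hK x z := by
  obtain ⟨w, hw, rfl⟩ := h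
  obtain ⟨w', hw', rfl⟩ := h'
  exact ⟨w' * w, mul_mem hw' hw, rfl⟩

lemma stayLe {k : ℕ} (hk : k ∉ K) {w : Equiv.Perm (Fin n)} (hw : w ∈ SK n K hK) :
    ∀ x : Fin n, (w x).1 ≤ k ↔ x.1 ≤ k := by
  induction hw using Subgroup.closure_induction with
  | mem σ hσ =>
    obtain ⟨j, hj, rfl⟩ := hσ
    intro x
    have hjk : j ≠ k := fun h => hk (h ▸ hj)
    rcases eq_or_ne x ⟨j, Nat.lt_of_succ_lt (hK j hj)⟩ with rfl | hx1
    · rw [Equiv.swap_apply_left]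
      simp only
      omega
    · rcases eq_or_ne x ⟨j + 1, hK j hj⟩ with rfl | hx2
      · rw [Equiv.swap_apply_right]
        simp only
        omega
      · rw [Equiv.swap_apply_of_ne_of_ne hx1 hx2]
  | one => intro x; simp
  | mul a b _ _ ha hb => intro x; rw [Equiv.Perm.mul_apply, ha, hb]
  | inv a _ ha =>
    intro x
    conv_lhs => rw [← ha (a⁻¹ x)]
    simp

lemma mem_K_of_map_succ {k : ℕ} (hk1 : k + 1 < n)
    (h : ∃ w ∈ SK n K hK, w ⟨k, Nat.lt_of_succ_lt hk1⟩ = (⟨k + 1, hk1⟩ : Fin n)) :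
    k ∈ K := by
  by_contra hk
  obtain ⟨w, hw, hwk⟩ := h
  have h2 := (stayLe hK hk hw ⟨k, Nat.lt_of_succ_lt hk1⟩).2 (le_refl k)
  rw [hwk] at h2
  simp at h2

lemma swap_mem_SK {k : ℕ} (hk : k ∈ K) :
    Equiv.swap ⟨k, Nat.lt_of_succ_lt (hK k hk)⟩ ⟨k + 1, hK k hk⟩ ∈ SK n K hK :=
  Subgroup.subset_closure ⟨k, hk, rfl⟩

/-- The orbit of a point. -/
def Opt (x : Fin n) : Finset (Fin n) := Finset.univ.filter (fun y => samePt hK x y)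

lemma mem_Opt {x y : Fin n} : y ∈ Opt hK x ↔ samePt hK x y := by
  simp [Opt]

/-- Orbit-intersection cardinality data of a subset. -/
def delta (I : Finset (Fin n)) (x : Fin n) : ℕ := (I ∩ Opt hK x).card

lemma delta_image {v : Equiv.Perm (Fin n)} (hv : v ∈ SK n K hK)
    (I : Finset (Fin n)) (x : Fin n) :
    delta hK (I.image v) x = delta hK I x := by
  have hset : I.image v ∩ Opt hK x = (I ∩ Opt hK x).image v := by
    ext z
    simp only [Finset.mem_inter, Finset.mem_image, mem_Opt]
    constructor
    · rintro ⟨⟨y, hy, rfl⟩, hz⟩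
      exact ⟨y, ⟨hy, samePt_trans hK hz (samePt_symm hK ⟨v, hv, rfl⟩)⟩, rfl⟩
    · rintro ⟨y, ⟨hy, hyo⟩, rfl⟩
      exact ⟨⟨y, hy, rfl⟩, samePt_trans hK hyo ⟨v, hv, rfl⟩⟩
  rw [delta, hset, Finset.card_image_of_injective _ v.injective]
  rfl

lemma lowerK_down {I : Finset (Fin n)} (hI : lowerK n K hK I) :
    ∀ (m : ℕ) (y z : Fin n), z.1 - y.1 ≤ m → samePt hK y z → y ≤ z → z ∈ I → y ∈ I := by
  intro m
  induction m with
  | zero =>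
    intro y z hm _ hyz hz
    have : y = z := Fin.ext (by rw [Fin.le_def] at hyz; omega)
    rwa [this]
  | succ m ih =>
    intro y z hm hsame hyz hz
    rcases eq_or_ne y z with rfl | hne
    · exact hz
    rw [Fin.le_def] at hyz
    have hlt : y.1 < z.1 := by
      rcases Nat.lt_or_ge y.1 z.1 with h | h
      · exact h
      · exact absurd (Fin.ext (by omega) : y = z) hne
    set k : ℕ := z.1 - 1 with hkdef
    have hk1 : k + 1 < n := by have := z.2; omega
    have kK : k ∈ K := by
      by_contra hkK
      obtain ⟨w, hw, hwz⟩ := hsame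
      have := (stayLe hK hkK hw y).2 (by omega)
      rw [hwz] at this
      omega
    set a : Fin n := ⟨k, Nat.lt_of_succ_lt hk1⟩ with hadef
    set b : Fin n := ⟨k + 1, hk1⟩ with hbdef
    have hσ := swap_mem_SK hK kK
    have hzb : z = b := Fin.ext (by simp [hbdef]; omega)
    have haI : a ∈ I :=
      hI k hk1 ⟨Equiv.swap a b, hσ, Equiv.swap_apply_left a b⟩ (by have h5 := hz; rwa [hzb] at h5)
    have hza : samePt hK z a := ⟨Equiv.swap a b, hσ, by rw [hzb]; exact Equiv.swap_apply_right a b⟩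
    exact ih y a (by simp [hadef]; omega) (samePt_trans hK hsame hza)
      (by rw [Fin.le_def]; simp [hadef]; omega) haI

lemma eq_of_downward {O : Finset (Fin n)} :
    ∀ {S T : Finset (Fin n)}, S ⊆ O → T ⊆ O →
    (∀ z ∈ S, ∀ y ∈ O, y ≤ z → y ∈ S) →
    (∀ z ∈ T, ∀ y ∈ O, y ≤ z → y ∈ T) →
    S.card = T.card → S = T := by
  have key : ∀ {S T : Finset (Fin n)}, S ⊆ O → T ⊆ O →
      (∀ z ∈ S, ∀ y ∈ O, y ≤ z → y ∈ S) →
      (∀ z ∈ T, ∀ y ∈ O, y ≤ z → y ∈ T) →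
      S.card = T.card → S ⊆ T := by
    intro S T hS hT hSd hTd hc x hx
    by_contra hxT
    have h1 : T ⊆ O.filter (fun z => z < x) := by
      intro z hz
      refine Finset.mem_filter.2 ⟨hT hz, ?_⟩
      by_contra hzx
      push_neg at hzx
      exact hxT (hTd z hz x (hS hx) hzx)
    have h2 : O.filter (fun z => z ≤ x) ⊆ S := by
      intro y hy
      obtain ⟨hyO, hyx⟩ := Finset.mem_filter.1 hy
      exact hSd x hx y hyO hyx
    have h3 : (O.filter (fun z => z < x)).card < (O.filter (fun z => z ≤ x)).card := by
      apply Finset.card_lt_card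
      rw [Finset.ssubset_def]
      constructor
      · intro z hz
        obtain ⟨hzO, hzx⟩ := Finset.mem_filter.1 hz
        exact Finset.mem_filter.2 ⟨hzO, le_of_lt hzx⟩
      · intro hsub
        have hx1 : x ∈ O.filter (fun z => z ≤ x) := Finset.mem_filter.2 ⟨hS hx, le_refl x⟩
        have := Finset.mem_filter.1 (hsub hx1)
        exact absurd this.2 (lt_irrefl x)
    have := (Finset.card_le_card h1).trans_lt (h3.trans_le (Finset.card_le_card h2))
    omega
  intro S T hS hT hSd hTd hc
  exact Finset.Subset.antisymm (key hS hT hSd hTd hc) (key hT hS hTd hSd hc.symm)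

lemma lowerK_unique {I I' : Finset (Fin n)} (hI : lowerK n K hK I) (hI' : lowerK n K hK I')
    (hd : ∀ x, delta hK I x = delta hK I' x) : I = I' := by
  ext x
  have hx : x ∈ Opt hK x := mem_Opt hK |>.2 (samePt_refl hK x)
  have hdown : ∀ (k' : Finset (Fin n)), lowerK n K hK k' →
      ∀ z ∈ k' ∩ Opt hK x, ∀ y ∈ Opt hK x, y ≤ z → y ∈ k' ∩ Opt hK x := by
    intro k' hk' z hz y hy hyz
    obtain ⟨hzI, hzO⟩ := Finset.mem_inter.1 hz
    refine Finset.mem_inter.2 ⟨?_, hy⟩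
    have h1 : samePt hK y z :=
      samePt_trans hK (samePt_symm hK ((mem_Opt hK).1 hy)) ((mem_Opt hK).1 hzO)
    exact lowerK_down hK hk' (z.1 - y.1) y z le_rfl h1 hyz hzI
  have heq : I ∩ Opt hK x = I' ∩ Opt hK x :=
    eq_of_downward Finset.inter_subset_right Finset.inter_subset_right
      (hdown I hI) (hdown I' hI') (hd x)
  constructor
  · intro h
    have : x ∈ I' ∩ Opt hK x := heq ▸ (Finset.mem_inter.2 ⟨h, hx⟩)
    exact (Finset.mem_inter.1 this).1
  · intro h
    have : x ∈ I ∩ Opt hK x := heq.symm ▸ (Finset.mem_inter.2 ⟨h, hx⟩)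
    exact (Finset.mem_inter.1 this).1

/-- Pairwise comparability of a collection of subsets. -/
def PWComp (C : Finset (Finset (Fin n))) : Prop :=
  ∀ F ∈ C, ∀ F' ∈ C, F ⊆ F' ∨ F' ⊆ F

/-- Total measure used for the sorting induction. -/
def mu (C : Finset (Finset (Fin n))) : ℕ := ∑ F ∈ C, ∑ x ∈ F, x.1


lemma swap_sum_le {k : ℕ} (hk1 : k + 1 < n) (F : Finset (Fin n))
    (hex : ¬((⟨k, Nat.lt_of_succ_lt hk1⟩ : Fin n) ∈ F ∧ (⟨k + 1, hk1⟩ : Fin n) ∉ F)) :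
    (∑ x ∈ F.image ⇑(Equiv.swap (⟨k, Nat.lt_of_succ_lt hk1⟩ : Fin n) ⟨k + 1, hk1⟩), x.1
      ≤ ∑ x ∈ F, x.1)
    ∧ (((⟨k + 1, hk1⟩ : Fin n) ∈ F ∧ (⟨k, Nat.lt_of_succ_lt hk1⟩ : Fin n) ∉ F) →
       ∑ x ∈ F.image ⇑(Equiv.swap (⟨k, Nat.lt_of_succ_lt hk1⟩ : Fin n) ⟨k + 1, hk1⟩), x.1
         < ∑ x ∈ F, x.1) := by
  set a : Fin n := ⟨k, Nat.lt_of_succ_lt hk1⟩ with hadef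
  set b : Fin n := ⟨k + 1, hk1⟩ with hbdef
  have hab : a ≠ b := by simp [hadef, hbdef, Fin.ext_iff]
  have hsum : ∑ x ∈ F.image ⇑(Equiv.swap a b), x.1 = ∑ x ∈ F, ((Equiv.swap a b) x).1 :=
    Finset.sum_image (fun x _ y _ h => (Equiv.swap a b).injective h)
  by_cases hb : b ∈ F
  · by_cases ha : a ∈ F
    · -- both in: sums equal
      have heq : ∑ x ∈ F, (((Equiv.swap a b) x).1) = ∑ x ∈ F, x.1 := by
        refine Finset.sum_nbij' (⇑(Equiv.swap a b)) (⇑(Equiv.swap a b)) ?_ ?_ ?_ ?_ ?_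
        · intro x hx
          rcases eq_or_ne x a with rfl | hx1
          · rwa [Equiv.swap_apply_left]
          rcases eq_or_ne x b with rfl | hx2
          · rwa [Equiv.swap_apply_right]
          rwa [Equiv.swap_apply_of_ne_of_ne hx1 hx2]
        · intro x hx
          rcases eq_or_ne x a with rfl | hx1
          · rwa [Equiv.swap_apply_left]
          rcases eq_or_ne x b with rfl | hx2
          · rwa [Equiv.swap_apply_right]
          rwa [Equiv.swap_apply_of_ne_of_ne hx1 hx2]
        · intro x _; exact Equiv.swap_apply_self a b x
        · intro x _; exact Equiv.swap_apply_self a b x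
        · intro x _; rfl
      constructor
      · rw [hsum, heq]
      · rintro ⟨_, ha'⟩; exact absurd ha ha'
    · -- b ∈ F, a ∉ F : strict decrease
      have hstep : ∑ x ∈ F, ((Equiv.swap a b) x).1 + 1 = ∑ x ∈ F, x.1 := by
        rw [← Finset.sum_erase_add F (fun x => ((Equiv.swap a b) x).1) hb,
            ← Finset.sum_erase_add F (fun x => x.1) hb]
        have h1 : ∀ x ∈ F.erase b, ((Equiv.swap a b) x).1 = x.1 := by
          intro x hx
          have hx1 : x ≠ a := fun h => ha (h ▸ (Finset.mem_of_mem_erase hx))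
          have hx2 : x ≠ b := Finset.ne_of_mem_erase hx
          rw [Equiv.swap_apply_of_ne_of_ne hx1 hx2]
        rw [Finset.sum_congr rfl h1]
        have : ((Equiv.swap a b) b).1 = k := by rw [Equiv.swap_apply_right]
        rw [this]
        simp [hbdef]
        omega
      constructor
      · rw [hsum]; omega
      · intro _; rw [hsum]; omega
  · have ha : a ∉ F := fun h => hex ⟨h, hb⟩
    have heq : ∑ x ∈ F, (((Equiv.swap a b) x).1) = ∑ x ∈ F, x.1 := by
      refine Finset.sum_congr rfl ?_
      intro x hx
      have hx1 : x ≠ a := fun h => ha (h ▸ hx)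
      have hx2 : x ≠ b := fun h => hb (h ▸ hx)
      rw [Equiv.swap_apply_of_ne_of_ne hx1 hx2]
    constructor
    · rw [hsum, heq]
    · rintro ⟨hb', _⟩; exact absurd hb' hb

lemma canon_step (C : Finset (Finset (Fin n))) (hpw : PWComp C)
    (hc : ¬ ∀ F ∈ C, lowerK n K hK F) :
    ∃ σ ∈ SK n K hK, ∃ C' : Finset (Finset (Fin n)),
      mu C' < mu C ∧ PWComp C' ∧ (∀ F ∈ C, F.image ⇑σ ∈ C') := by
  push_neg at hc
  obtain ⟨F₀, hF₀, hnl⟩ := hc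
  simp only [lowerK] at hnl
  push_neg at hnl
  obtain ⟨k, hk1, hex, hbF₀, haF₀⟩ := hnl
  have kK : k ∈ K := mem_K_of_map_succ hK hk1 hex
  set a : Fin n := ⟨k, Nat.lt_of_succ_lt hk1⟩ with hadef
  set b : Fin n := ⟨k + 1, hk1⟩ with hbdef
  set σ := Equiv.swap a b with hσdef
  have hσK : σ ∈ SK n K hK := swap_mem_SK hK kK
  refine ⟨σ, hσK, C.image (fun F => F.image ⇑σ), ?_, ?_, ?_⟩
  · have hmu' : mu (C.image (fun F => F.image ⇑σ)) = ∑ F ∈ C, ∑ x ∈ F.image ⇑σ, x.1 :=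
      Finset.sum_image (fun x _ y _ h => Finset.image_injective σ.injective h)
    rw [hmu', mu]
    apply Finset.sum_lt_sum
    · intro F hF
      have hexF : ¬(a ∈ F ∧ b ∉ F) := by
        rintro ⟨haF, hbF⟩
        rcases hpw F hF F₀ hF₀ with h | h
        · exact haF₀ (h haF)
        · exact hbF (h hbF₀)
      exact (swap_sum_le hk1 F hexF).1
    · refine ⟨F₀, hF₀, ?_⟩
      have hexF : ¬(a ∈ F₀ ∧ b ∉ F₀) := by rintro ⟨h1, _⟩; exact haF₀ h1
      exact (swap_sum_le hk1 F₀ hexF).2 ⟨hbF₀, haF₀⟩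
  · intro F' hF' G' hG'
    obtain ⟨F, hF, rfl⟩ := Finset.mem_image.1 hF'
    obtain ⟨G, hG, rfl⟩ := Finset.mem_image.1 hG'
    rcases hpw F hF G hG with h | h
    · exact Or.inl (Finset.image_subset_image h)
    · exact Or.inr (Finset.image_subset_image h)
  · intro F hF
    exact Finset.mem_image_of_mem _ hF

lemma canon : ∀ (N : ℕ) (C : Finset (Finset (Fin n))), mu C ≤ N → PWComp C →
    ∃ h ∈ SK n K hK, ∀ F ∈ C, lowerK n K hK (F.image h) := by
  intro N
  induction N with
  | zero =>
    intro C hmu hpw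
    -- we handle both cases uniformly below via the auxiliary step; for N = 0 the
    -- non-canonical case is impossible
    by_cases hc : ∀ F ∈ C, lowerK n K hK F
    · exact ⟨1, one_mem _, by intro F hF; simpa using hc F hF⟩
    · exfalso
      obtain ⟨σ, hσ, C', hC'mu, _, _⟩ := canon_step hK C hpw hc
      omega
  | succ N ih =>
    intro C hmu hpw
    by_cases hc : ∀ F ∈ C, lowerK n K hK F
    · exact ⟨1, one_mem _, by intro F hF; simpa using hc F hF⟩
    · obtain ⟨σ, hσ, C', hC'mu, hC'pw, hC'⟩ := canon_step hK C hpw hc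
      obtain ⟨h', hh', hcan⟩ := ih C' (by omega) hC'pw
      refine ⟨h' * σ, mul_mem hh' hσ, ?_⟩
      intro F hF
      have himg : F.image ⇑(h' * σ) = (F.image ⇑σ).image ⇑h' := by
        rw [Equiv.Perm.coe_mul, ← Finset.image_image]
      rw [himg]
      exact hcan _ (hC' F hF)

end PermutohedronA

namespace PermutohedronA

open scoped Classical

variable {n : ℕ} {K : Finset ℕ} (hK : ∀ k ∈ K, k + 1 < n)

lemma key_exists (I1 J : Finset (Fin n)) (S : Finset (Finset (Fin n)))
    (hIJ : ∃ v ∈ SK n K hK, I1.image ⇑v = J)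
    (h1 : PWComp (insert I1 S)) (h2 : PWComp (insert J S)) :
    ∃ g ∈ SK n K hK, I1.image ⇑g = J ∧ ∀ F ∈ S, F.image ⇑g = F := by
  obtain ⟨h, hh, hcan⟩ := canon hK (mu (insert I1 S)) (insert I1 S) le_rfl h1
  obtain ⟨h', hh', hcan'⟩ := canon hK (mu (insert J S)) (insert J S) le_rfl h2
  obtain ⟨v, hv, hvJ⟩ := hIJ
  have hdIJ : ∀ x, delta hK I1 x = delta hK J x := fun x => by
    rw [← hvJ, delta_image hK hv]
  have e0 : I1.image ⇑h = J.image ⇑h' := by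
    apply lowerK_unique hK (hcan I1 (Finset.mem_insert_self _ _))
      (hcan' J (Finset.mem_insert_self _ _))
    intro x
    rw [delta_image hK hh, delta_image hK hh']
    exact hdIJ x
  have eF : ∀ F ∈ S, F.image ⇑h = F.image ⇑h' := by
    intro F hF
    apply lowerK_unique hK (hcan F (Finset.mem_insert_of_mem hF))
      (hcan' F (Finset.mem_insert_of_mem hF))
    intro x
    rw [delta_image hK hh, delta_image hK hh']
  have hinv : ∀ (F' : Finset (Fin n)), (F'.image ⇑h').image ⇑h'⁻¹ = F' := by
    intro F'
    rw [Finset.image_image]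
    have hid : (⇑h'⁻¹ ∘ ⇑h') = id := funext fun x => h'.symm_apply_apply x
    rw [hid, Finset.image_id]
  refine ⟨h'⁻¹ * h, mul_mem (inv_mem hh') hh, ?_, ?_⟩
  · rw [Equiv.Perm.coe_mul, ← Finset.image_image, e0, hinv]
  · intro F hF
    rw [Equiv.Perm.coe_mul, ← Finset.image_image, eF F hF, hinv]

/-- Action of a permutation on exponent vectors. -/
def actE (w : Equiv.Perm (Fin n)) (e : FA n →₀ ℕ) : FA n →₀ ℕ :=
  e.mapDomain (permFA n w)

lemma actE_one (e : FA n →₀ ℕ) : actE 1 e = e := by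
  rw [actE, show permFA n 1 = id from funext permFA_one, Finsupp.mapDomain_id]

lemma actE_mul (v w : Equiv.Perm (Fin n)) (e : FA n →₀ ℕ) :
    actE (v * w) e = actE v (actE w e) := by
  rw [actE, actE, actE,
    show permFA n (v * w) = permFA n v ∘ permFA n w from funext (permFA_mul v w),
    Finsupp.mapDomain_comp]

lemma actE_add (w : Equiv.Perm (Fin n)) (e e' : FA n →₀ ℕ) :
    actE w (e + e') = actE w e + actE w e' := Finsupp.mapDomain_add

lemma actE_single (w : Equiv.Perm (Fin n)) (I : FA n) (m : ℕ) :
    actE w (Finsupp.single I m) = Finsupp.single (permFA n w I) m :=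
  Finsupp.mapDomain_single

lemma actE_support (w : Equiv.Perm (Fin n)) (e : FA n →₀ ℕ) :
    (actE w e).support = e.support.image (permFA n w) :=
  Finsupp.mapDomain_support_of_injective (permFA_injective w) e

/-- The chain condition on an exponent vector. -/
def IsChainE (e : FA n →₀ ℕ) : Prop :=
  ∀ F ∈ e.support, ∀ F' ∈ e.support, F.1 ⊆ F'.1 ∨ F'.1 ⊆ F.1

lemma isChainE_actE {w : Equiv.Perm (Fin n)} {e : FA n →₀ ℕ} :
    IsChainE (actE w e) ↔ IsChainE e := by
  constructor
  · intro h F hF F' hF'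
    have h1 := h (permFA n w F) (by rw [actE_support]; exact Finset.mem_image_of_mem _ hF)
      (permFA n w F') (by rw [actE_support]; exact Finset.mem_image_of_mem _ hF')
    rcases h1 with h1 | h1
    · left; rwa [show (permFA n w F).1 = F.1.image ⇑w from rfl,
        show (permFA n w F').1 = F'.1.image ⇑w from rfl,
        Finset.image_subset_image_iff w.injective] at h1
    · right; rwa [show (permFA n w F).1 = F.1.image ⇑w from rfl,
        show (permFA n w F').1 = F'.1.image ⇑w from rfl,
        Finset.image_subset_image_iff w.injective] at h1
  · intro h F hF F' hF'
    rw [actE_support] at hF hF'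
    obtain ⟨A, hA, rfl⟩ := Finset.mem_image.1 hF
    obtain ⟨A', hA', rfl⟩ := Finset.mem_image.1 hF'
    rcases h A hA A' hA' with h1 | h1
    · left
      show A.1.image ⇑w ⊆ A'.1.image ⇑w
      rwa [Finset.image_subset_image_iff w.injective]
    · right
      show A'.1.image ⇑w ⊆ A.1.image ⇑w
      rwa [Finset.image_subset_image_iff w.injective]

lemma support_addE (e e' : FA n →₀ ℕ) : (e + e').support = e.support ∪ e'.support := by
  ext a
  simp only [Finsupp.mem_support_iff, Finset.mem_union, Finsupp.add_apply]
  omega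

lemma monomial_mem_J {e : FA n →₀ ℕ} (h : ¬ IsChainE e) :
    MvPolynomial.monomial e (1 : ℚ) ∈ Jideal n := by
  rw [IsChainE] at h
  push_neg at h
  obtain ⟨F, hF, F', hF', h1, h2⟩ := h
  have hne : F ≠ F' := by rintro rfl; exact h1 (subset_refl _)
  have hFe : e F ≠ 0 := Finsupp.mem_support_iff.1 hF
  have hF'e : e F' ≠ 0 := Finsupp.mem_support_iff.1 hF'
  set rest := e - Finsupp.single F 1 - Finsupp.single F' 1 with hrest
  have he : Finsupp.single F 1 + Finsupp.single F' 1 + rest = e := by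
    ext G
    simp only [Finsupp.add_apply, hrest, Finsupp.tsub_apply, Finsupp.single_apply]
    rcases eq_or_ne F G with rfl | hFG
    · rw [if_pos rfl, if_neg (fun hh : F' = F => hne hh.symm)]
      omega
    · rw [if_neg hFG]
      rcases eq_or_ne F' G with rfl | hF'G
      · rw [if_pos rfl]
        omega
      · rw [if_neg hF'G]
        omega
  have hmono : MvPolynomial.monomial e (1 : ℚ)
      = (X F * X F') * MvPolynomial.monomial rest 1 := by
    have hx : (X F : MvPolynomial (FA n) ℚ) = MvPolynomial.monomial (Finsupp.single F 1) 1 := rfl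
    have hx' : (X F' : MvPolynomial (FA n) ℚ) = MvPolynomial.monomial (Finsupp.single F' 1) 1 := rfl
    rw [hx, hx', MvPolynomial.monomial_mul, MvPolynomial.monomial_mul, one_mul, one_mul, he]
  rw [hmono]
  exact Ideal.mul_mem_right _ _ (Ideal.subset_span ⟨F, F', h1, h2, rfl⟩)

noncomputable instance instFintypeSK (n : ℕ) (K : Finset ℕ) (hK : ∀ k ∈ K, k + 1 < n) :
    Fintype (SK n K hK) := Fintype.ofFinite _

/-- The group-orbit sum of a monomial. -/
def Psum (e : FA n →₀ ℕ) : MvPolynomial (FA n) ℚ :=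
  ∑ w : SK n K hK, MvPolynomial.monomial (actE (↑w) e) 1

lemma Psum_act {g : Equiv.Perm (Fin n)} (hg : g ∈ SK n K hK) (e : FA n →₀ ℕ) :
    Psum hK (actE g e) = Psum hK e := by
  rw [Psum, Psum]
  refine Fintype.sum_bijective (· * (⟨g, hg⟩ : SK n K hK))
    (Group.mulRight_bijective _) _ _ ?_
  intro w
  rw [← actE_mul]
  rfl

lemma Psum_nonchain {e : FA n →₀ ℕ} (h : ¬ IsChainE e) : Psum hK e ∈ Jideal n :=
  Ideal.sum_mem _ (fun w _ => monomial_mem_J (fun hc => h (isChainE_actE.1 hc)))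

lemma Psum_mul (I1 : FA n) (e' : FA n →₀ ℕ) :
    Psum hK (Finsupp.single I1 1) * Psum hK e'
      = ∑ u : SK n K hK, Psum hK (actE ↑u (Finsupp.single I1 1) + e') := by
  rw [Psum, Psum, Finset.sum_mul_sum]
  have hterm : ∀ (v w : SK n K hK),
      (MvPolynomial.monomial (actE ↑v (Finsupp.single I1 1)) (1 : ℚ))
        * MvPolynomial.monomial (actE ↑w e') 1
      = MvPolynomial.monomial (actE ↑v (Finsupp.single I1 1) + actE ↑w e') 1 := by
    intro v w
    rw [MvPolynomial.monomial_mul, one_mul]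
  calc ∑ v : SK n K hK, ∑ w : SK n K hK,
        (MvPolynomial.monomial (actE ↑v (Finsupp.single I1 1)) (1 : ℚ))
          * MvPolynomial.monomial (actE ↑w e') 1
      = ∑ w : SK n K hK, ∑ v : SK n K hK,
          MvPolynomial.monomial (actE ↑v (Finsupp.single I1 1) + actE ↑w e') 1 := by
        rw [Finset.sum_comm]
        exact Finset.sum_congr rfl fun w _ => Finset.sum_congr rfl fun v _ => hterm v w
    _ = ∑ w : SK n K hK, ∑ u : SK n K hK,
          MvPolynomial.monomial (actE ↑w (actE ↑u (Finsupp.single I1 1) + e')) 1 := by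
        refine Finset.sum_congr rfl fun w _ => ?_
        refine (Fintype.sum_bijective (fun u => w * u) (Group.mulLeft_bijective w) _ _ ?_).symm
        intro u
        rw [actE_add, ← actE_mul]
        rfl
    _ = ∑ u : SK n K hK, ∑ w : SK n K hK,
          MvPolynomial.monomial (actE ↑w (actE ↑u (Finsupp.single I1 1) + e')) 1 :=
        Finset.sum_comm
    _ = ∑ u : SK n K hK, Psum hK (actE ↑u (Finsupp.single I1 1) + e') := rfl

/-- Total degree of an exponent vector. -/
def degE (e : FA n →₀ ℕ) : ℕ := e.sum fun _ m => m

lemma degE_add (e e' : FA n →₀ ℕ) : degE (e + e') = degE e + degE e' :=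
  Finsupp.sum_add_index' (fun _ => rfl) (fun _ _ _ => rfl)

lemma degE_single (I : FA n) : degE (Finsupp.single I 1) = 1 :=
  Finsupp.sum_single_index rfl

end PermutohedronA

namespace PermutohedronA

open scoped Classical

variable {n : ℕ} {K : Finset ℕ} (hK : ∀ k ∈ K, k + 1 < n)


set_option synthInstance.maxHeartbeats 1000000 in
lemma mk_nsmul (p : MvPolynomial (FA n) ℚ) (c : ℕ) :
    Ideal.Quotient.mk (Iideal n ⊔ Jideal n) (c • p)
      = c • Ideal.Quotient.mk (Iideal n ⊔ Jideal n) p :=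
  map_nsmul (Ideal.Quotient.mk (Iideal n ⊔ Jideal n)) c p

lemma exists_lowerK_rep (I : FA n) :
    ∃ h ∈ SK n K hK, lowerK n K hK ((permFA n h I).1) := by
  obtain ⟨h, hh, hcan⟩ := canon hK (mu {I.1}) {I.1} le_rfl
    (by
      intro F hF F' hF'
      rw [Finset.mem_singleton] at hF hF'
      subst hF; subst hF'
      exact Or.inl (subset_refl _))
  exact ⟨h, hh, hcan I.1 (Finset.mem_singleton_self _)⟩

lemma mk_Psum_single_mem_range (I1 : FA n) :
    Ideal.Quotient.mk (Iideal n ⊔ Jideal n) (Psum hK (Finsupp.single I1 1))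
      ∈ (MvPolynomial.aeval (phiMap n K hK) :
          MvPolynomial (VarK n K hK) ℚ →ₐ[ℚ]
            (MvPolynomial (FA n) ℚ ⧸ (Iideal n ⊔ Jideal n))).range := by
  obtain ⟨h, hh, hlow⟩ := exists_lowerK_rep hK I1
  set I0 : FA n := permFA n h I1 with hI0
  set I0K : FAK n K hK := ⟨I0.1, ⟨I0.2, hlow⟩⟩ with hI0K
  have hI0eq : (⟨I0K.1, I0K.2.1⟩ : FA n) = I0 := Subtype.ext rfl
  set T : Finset (FA n) := Finset.univ.filter
      (fun J : FA n => ∃ w ∈ SK n K hK, permFA n w (⟨I0K.1, I0K.2.1⟩ : FA n) = J) with hT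
  have hmemT : ∀ J : FA n, J ∈ T ↔ ∃ w ∈ SK n K hK, permFA n w I1 = J := by
    intro J
    rw [hT, Finset.mem_filter]
    simp only [Finset.mem_univ, true_and, hI0eq]
    constructor
    · rintro ⟨w, hw, rfl⟩
      exact ⟨w * h, mul_mem hw hh, by rw [permFA_mul, hI0]⟩
    · rintro ⟨w, hw, rfl⟩
      refine ⟨w * h⁻¹, mul_mem hw (inv_mem hh), ?_⟩
      rw [permFA_mul, hI0, permFA_inv_cancel]
  have hPsum : Psum hK (Finsupp.single I1 1) = ∑ J : FA n,
      ((Finset.univ.filter (fun w : SK n K hK => permFA n ↑w I1 = J)).card) • X J := by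
    rw [Psum,
      ← Finset.sum_fiberwise Finset.univ (fun w : SK n K hK => permFA n ↑w I1)
        (fun w => MvPolynomial.monomial (actE ↑w (Finsupp.single I1 1)) 1)]
    apply Finset.sum_congr rfl
    intro J _
    rw [show (∑ w ∈ Finset.univ.filter (fun w : SK n K hK => permFA n ↑w I1 = J),
        MvPolynomial.monomial (actE ↑w (Finsupp.single I1 1)) (1 : ℚ))
        = ∑ _w ∈ Finset.univ.filter (fun w : SK n K hK => permFA n ↑w I1 = J), X J from
      Finset.sum_congr rfl (fun w hw => by
        rw [actE_single]
        rw [(Finset.mem_filter.1 hw).2]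
        rfl), Finset.sum_const]
  set c : ℕ := (Finset.univ.filter (fun w : SK n K hK => permFA n ↑w I1 = I1)).card with hc
  have hconst : ∀ J ∈ T,
      (Finset.univ.filter (fun w : SK n K hK => permFA n ↑w I1 = J)).card = c := by
    intro J hJ
    obtain ⟨u, hu, huJ⟩ := (hmemT J).1 hJ
    rw [hc]
    refine Finset.card_bij' (fun w _ => (⟨u, hu⟩ : SK n K hK)⁻¹ * w)
      (fun w _ => (⟨u, hu⟩ : SK n K hK) * w) ?_ ?_ ?_ ?_
    · intro w hw
      rw [Finset.mem_filter] at hw ⊢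
      refine ⟨Finset.mem_univ _, ?_⟩
      show permFA n (u⁻¹ * ↑w) I1 = I1
      rw [permFA_mul, hw.2, ← huJ, permFA_inv_cancel]
    · intro w hw
      rw [Finset.mem_filter] at hw ⊢
      refine ⟨Finset.mem_univ _, ?_⟩
      show permFA n (u * ↑w) I1 = J
      rw [permFA_mul, hw.2, huJ]
    · intro w _; group
    · intro w _; group
  have hrestrict : Psum hK (Finsupp.single I1 1) = ∑ J ∈ T, c • X J := by
    rw [hPsum]
    rw [← Finset.sum_subset (Finset.subset_univ T) (fun J _ hJT => ?_)]
    · exact Finset.sum_congr rfl (fun J hJ => by rw [hconst J hJ])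
    · have hfib : Finset.univ.filter (fun w : SK n K hK => permFA n ↑w I1 = J) = ∅ := by
        rw [Finset.eq_empty_iff_forall_notMem]
        intro w hw
        exact hJT ((hmemT J).2 ⟨↑w, w.2, (Finset.mem_filter.1 hw).2⟩)
      rw [hfib]
      simp
  have horb : Psum hK (Finsupp.single I1 1)
      = c • orbitSum n K hK (⟨I0K.1, I0K.2.1⟩ : FA n) := by
    rw [hrestrict, orbitSum, Finset.smul_sum]
  have hcpos : 0 < c := by
    rw [hc]
    refine Finset.card_pos.2 ⟨1, Finset.mem_filter.2 ⟨Finset.mem_univ _, ?_⟩⟩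
    show permFA n ((1 : Equiv.Perm (Fin n))) I1 = I1
    exact permFA_one I1
  have hphi : (MvPolynomial.aeval (phiMap n K hK) :
      MvPolynomial (VarK n K hK) ℚ →ₐ[ℚ]
        (MvPolynomial (FA n) ℚ ⧸ (Iideal n ⊔ Jideal n))) (X (Sum.inl I0K))
      = Ideal.Quotient.mk (Iideal n ⊔ Jideal n)
          (orbitSum n K hK (⟨I0K.1, I0K.2.1⟩ : FA n)) := by
    rw [MvPolynomial.aeval_X]
    rfl
  rw [horb, mk_nsmul, ← hphi]
  exact nsmul_mem (AlgHom.mem_range_self _ _) c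

lemma mk_Psum_mem_range : ∀ (N : ℕ) (e : FA n →₀ ℕ), degE e ≤ N →
    Ideal.Quotient.mk (Iideal n ⊔ Jideal n) (Psum hK e)
      ∈ (MvPolynomial.aeval (phiMap n K hK) :
          MvPolynomial (VarK n K hK) ℚ →ₐ[ℚ]
            (MvPolynomial (FA n) ℚ ⧸ (Iideal n ⊔ Jideal n))).range := by
  have hzerocase : ∀ (e : FA n →₀ ℕ), e = 0 →
      Ideal.Quotient.mk (Iideal n ⊔ Jideal n) (Psum hK e)
        ∈ (MvPolynomial.aeval (phiMap n K hK) :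
            MvPolynomial (VarK n K hK) ℚ →ₐ[ℚ]
              (MvPolynomial (FA n) ℚ ⧸ (Iideal n ⊔ Jideal n))).range := by
    rintro e rfl
    have : Psum hK (0 : FA n →₀ ℕ)
        = (Fintype.card (SK n K hK)) • (1 : MvPolynomial (FA n) ℚ) := by
      rw [Psum]
      rw [show (∑ w : SK n K hK, MvPolynomial.monomial (actE ↑w (0 : FA n →₀ ℕ)) (1 : ℚ))
          = ∑ _w : SK n K hK, (1 : MvPolynomial (FA n) ℚ) from
        Finset.sum_congr rfl (fun w _ => by
          rw [show actE (↑w) (0 : FA n →₀ ℕ) = 0 from Finsupp.mapDomain_zero]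
          simp), Finset.sum_const, Finset.card_univ]
    rw [this, mk_nsmul, map_one]
    exact nsmul_mem (one_mem _) _
  have hdegpos : ∀ (e : FA n →₀ ℕ), e ≠ 0 → 1 ≤ degE e := by
    intro e he
    obtain ⟨I1, hI1⟩ := Finsupp.support_nonempty_iff.2 he
    have h1 : e I1 ≤ degE e :=
      Finset.single_le_sum (fun _ _ => Nat.zero_le _) hI1
    have h2 : e I1 ≠ 0 := Finsupp.mem_support_iff.1 hI1
    omega
  intro N
  induction N with
  | zero =>
    intro e hdeg
    rcases eq_or_ne e 0 with rfl | he
    · exact hzerocase 0 rfl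
    · exact absurd (hdegpos e he) (by omega)
  | succ N ih =>
    intro e hdeg
    by_cases hch : IsChainE e
    · rcases eq_or_ne e 0 with rfl | he
      · exact hzerocase 0 rfl
      -- main case
      obtain ⟨I1, hI1⟩ := Finsupp.support_nonempty_iff.2 he
      set e' := e - Finsupp.single I1 1 with he'def
      have hsplit : Finsupp.single I1 1 + e' = e := by
        ext G
        simp only [Finsupp.add_apply, he'def, Finsupp.tsub_apply, Finsupp.single_apply]
        have hne0 : e I1 ≠ 0 := Finsupp.mem_support_iff.1 hI1
        rcases eq_or_ne I1 G with rfl | hne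
        · rw [if_pos rfl]
          omega
        · rw [if_neg hne]
          omega
      have hdeg' : degE e' ≤ N := by
        have hd : degE e = 1 + degE e' := by rw [← hsplit, degE_add, degE_single]
        omega
      set V := Finset.univ.filter
        (fun u : SK n K hK => IsChainE (actE ↑u (Finsupp.single I1 1) + e')) with hV
      have hVne : (1 : SK n K hK) ∈ V := by
        rw [hV, Finset.mem_filter]
        refine ⟨Finset.mem_univ _, ?_⟩
        rw [show ((1 : SK n K hK) : Equiv.Perm (Fin n)) = 1 from rfl, actE_one, hsplit]
        exact hch
      have hsuppe : e.support = insert I1 e'.support := by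
        rw [← hsplit, support_addE, Finsupp.support_single_ne_zero _ one_ne_zero,
          ← Finset.insert_eq]
      have hkey : ∀ u : SK n K hK, u ∈ V →
          Psum hK (actE ↑u (Finsupp.single I1 1) + e') = Psum hK e := by
        intro u hu
        rw [hV, Finset.mem_filter] at hu
        have hchainu := hu.2
        set J : FA n := permFA n ↑u I1 with hJ
        have hsuppu : (actE ↑u (Finsupp.single I1 1) + e').support = insert J e'.support := by
          rw [support_addE, actE_single, Finsupp.support_single_ne_zero _ one_ne_zero,
            ← Finset.insert_eq]
        have hpw1 : PWComp (insert I1.1 (e'.support.image Subtype.val)) := by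
          rw [← Finset.image_insert, ← hsuppe]
          intro F hF F' hF'
          obtain ⟨A, hA, rfl⟩ := Finset.mem_image.1 hF
          obtain ⟨A', hA', rfl⟩ := Finset.mem_image.1 hF'
          exact hch A hA A' hA'
        have hpw2 : PWComp (insert J.1 (e'.support.image Subtype.val)) := by
          rw [← Finset.image_insert, ← hsuppu]
          intro F hF F' hF'
          obtain ⟨A, hA, rfl⟩ := Finset.mem_image.1 hF
          obtain ⟨A', hA', rfl⟩ := Finset.mem_image.1 hF'
          exact hchainu A hA A' hA'
        obtain ⟨g, hg, hgI, hgF⟩ := key_exists hK I1.1 J.1 (e'.support.image Subtype.val)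
          ⟨↑u, u.2, rfl⟩ hpw1 hpw2
        have hact : actE g e = actE ↑u (Finsupp.single I1 1) + e' := by
          rw [← hsplit, actE_add, actE_single, actE_single]
          congr 1
          · congr 1
            exact Subtype.ext hgI
          · rw [actE, Finsupp.mapDomain_congr (g := id) (fun F hF => Subtype.ext
              (hgF F.1 (Finset.mem_image_of_mem _ hF))), Finsupp.mapDomain_id]
        rw [← hact, Psum_act hK hg]
      have hprod := Psum_mul hK I1 e'
      have hsplitsum : (∑ u : SK n K hK, Psum hK (actE ↑u (Finsupp.single I1 1) + e'))
          = V.card • Psum hK e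
            + ∑ u ∈ Finset.univ.filter
                (fun u : SK n K hK => ¬ IsChainE (actE ↑u (Finsupp.single I1 1) + e')),
                Psum hK (actE ↑u (Finsupp.single I1 1) + e') := by
        rw [← Finset.sum_filter_add_sum_filter_not Finset.univ
          (fun u : SK n K hK => IsChainE (actE ↑u (Finsupp.single I1 1) + e'))]
        congr 1
        rw [Finset.sum_congr rfl hkey, Finset.sum_const]
      have hJmem : (∑ u ∈ Finset.univ.filter
            (fun u : SK n K hK => ¬ IsChainE (actE ↑u (Finsupp.single I1 1) + e')),
            Psum hK (actE ↑u (Finsupp.single I1 1) + e')) ∈ Jideal n :=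
        Ideal.sum_mem _ (fun u hu => Psum_nonchain hK (Finset.mem_filter.1 hu).2)
      have hq : (V.card : ℚ) • Ideal.Quotient.mk (Iideal n ⊔ Jideal n) (Psum hK e)
          = Ideal.Quotient.mk (Iideal n ⊔ Jideal n) (Psum hK (Finsupp.single I1 1))
            * Ideal.Quotient.mk (Iideal n ⊔ Jideal n) (Psum hK e') := by
        rw [← map_mul, hprod, hsplitsum, map_add, mk_nsmul,
          (Ideal.Quotient.eq_zero_iff_mem).2 (Ideal.mem_sup_right hJmem), add_zero,
          Nat.cast_smul_eq_nsmul]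
      have hmem : Ideal.Quotient.mk (Iideal n ⊔ Jideal n) (Psum hK (Finsupp.single I1 1))
            * Ideal.Quotient.mk (Iideal n ⊔ Jideal n) (Psum hK e')
          ∈ (MvPolynomial.aeval (phiMap n K hK) :
              MvPolynomial (VarK n K hK) ℚ →ₐ[ℚ]
                (MvPolynomial (FA n) ℚ ⧸ (Iideal n ⊔ Jideal n))).range :=
        mul_mem (mk_Psum_single_mem_range hK I1) (ih e' hdeg')
      rw [← hq] at hmem
      have hVpos : (0 : ℕ) < V.card := Finset.card_pos.2 ⟨1, hVne⟩
      have hfin := Subalgebra.smul_mem _ hmem ((V.card : ℚ)⁻¹)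
      rwa [inv_smul_smul₀ (Nat.cast_ne_zero.2 hVpos.ne')] at hfin
    · have hmk : Ideal.Quotient.mk (Iideal n ⊔ Jideal n) (Psum hK e) = 0 :=
        (Ideal.Quotient.eq_zero_iff_mem).2 (Ideal.mem_sup_right (Psum_nonchain hK hch))
      rw [hmk]
      exact zero_mem _

end PermutohedronA

namespace PermutohedronA

open scoped Classical

variable {n : ℕ} {K : Finset ℕ} (hK : ∀ k ∈ K, k + 1 < n)

/-- The induced action of a permutation on the quotient ring `A`. -/
def Phi (n : ℕ) (w : Equiv.Perm (Fin n)) :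
    (MvPolynomial (FA n) ℚ ⧸ (Iideal n ⊔ Jideal n)) →ₐ[ℚ]
      (MvPolynomial (FA n) ℚ ⧸ (Iideal n ⊔ Jideal n)) :=
  Ideal.Quotient.liftₐ _
    ((Ideal.Quotient.mkₐ ℚ (Iideal n ⊔ Jideal n)).comp (MvPolynomial.rename (permFA n w)))
    (fun a ha => by
      rw [AlgHom.comp_apply, Ideal.Quotient.mkₐ_eq_mk, Ideal.Quotient.eq_zero_iff_mem]
      exact ideal_stable w ha)

lemma Phi_mk (w : Equiv.Perm (Fin n)) (p : MvPolynomial (FA n) ℚ) :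
    Phi n w (Ideal.Quotient.mk (Iideal n ⊔ Jideal n) p)
      = Ideal.Quotient.mk (Iideal n ⊔ Jideal n) (MvPolynomial.rename (permFA n w) p) := by
  rw [Phi, show Ideal.Quotient.mk (Iideal n ⊔ Jideal n) p
      = Ideal.Quotient.mkₐ ℚ (Iideal n ⊔ Jideal n) p from rfl,
    Ideal.Quotient.liftₐ_apply, Ideal.Quotient.mkₐ_eq_mk]
  rfl

lemma Phi_one_apply (x : MvPolynomial (FA n) ℚ ⧸ (Iideal n ⊔ Jideal n)) :
    Phi n 1 x = x := by
  obtain ⟨p, rfl⟩ := Ideal.Quotient.mk_surjective x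
  rw [Phi_mk, show permFA n 1 = id from funext permFA_one, MvPolynomial.rename_id, AlgHom.id_apply]

lemma Phi_mul_apply (v w : Equiv.Perm (Fin n))
    (x : MvPolynomial (FA n) ℚ ⧸ (Iideal n ⊔ Jideal n)) :
    Phi n (v * w) x = Phi n v (Phi n w x) := by
  obtain ⟨p, rfl⟩ := Ideal.Quotient.mk_surjective x
  rw [Phi_mk, Phi_mk, Phi_mk, MvPolynomial.rename_rename,
    show permFA n v ∘ permFA n w = permFA n (v * w) from (funext (permFA_mul v w)).symm]

/-- The invariance of an element under the whole subgroup follows from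
invariance under the generators. -/
lemma phi_fixed_of_gen {x : MvPolynomial (FA n) ℚ ⧸ (Iideal n ⊔ Jideal n)}
    (hgen : ∀ σ ∈ {σ : Equiv.Perm (Fin n) | ∃ k, ∃ hk : k ∈ K,
      σ = Equiv.swap ⟨k, Nat.lt_of_succ_lt (hK k hk)⟩ ⟨k + 1, hK k hk⟩}, Phi n σ x = x) :
    ∀ w ∈ SK n K hK, Phi n w x = x := by
  intro w hw
  induction hw using Subgroup.closure_induction with
  | mem σ hσ => exact hgen σ hσ
  | one => exact Phi_one_apply x
  | mul a b _ _ ha hb => rw [Phi_mul_apply, hb, ha]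
  | inv a _ ha =>
    conv_lhs => rw [← ha]
    rw [← Phi_mul_apply, inv_mul_cancel, Phi_one_apply]

/-- The invariant subalgebra. -/
def invAlg : Subalgebra ℚ (MvPolynomial (FA n) ℚ ⧸ (Iideal n ⊔ Jideal n)) where
  carrier := {x | ∀ w ∈ SK n K hK, Phi n w x = x}
  mul_mem' := fun hx hy w hw => by rw [map_mul, hx w hw, hy w hw]
  one_mem' := fun w _ => map_one _
  add_mem' := fun hx hy w hw => by rw [map_add, hx w hw, hy w hw]
  zero_mem' := fun w _ => map_zero _
  algebraMap_mem' := fun r w _ => AlgHom.commutes _ r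

lemma mem_invAlg {x : MvPolynomial (FA n) ℚ ⧸ (Iideal n ⊔ Jideal n)} :
    x ∈ invAlg hK ↔ ∀ w ∈ SK n K hK, Phi n w x = x := Iff.rfl

lemma rename_orbitSum {w : Equiv.Perm (Fin n)} (hw : w ∈ SK n K hK) (I : FA n) :
    MvPolynomial.rename (permFA n w) (orbitSum n K hK I) = orbitSum n K hK I := by
  have hdef : ∀ (I' : FA n), orbitSum n K hK I' = ∑ J ∈ Finset.univ.filter
      (fun J : FA n => ∃ w ∈ SK n K hK, permFA n w I' = J), X J := fun _ => rfl
  rw [hdef, map_sum]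
  rw [Finset.sum_congr rfl (fun J _ => MvPolynomial.rename_X (permFA n w) J)]
  refine Finset.sum_nbij' (fun J => permFA n w J) (fun J => permFA n w⁻¹ J) ?_ ?_ ?_ ?_ ?_
  · rintro J hJ
    obtain ⟨v, hv, rfl⟩ := (Finset.mem_filter.1 hJ).2
    exact Finset.mem_filter.2 ⟨Finset.mem_univ _,
      ⟨w * v, mul_mem hw hv, (permFA_mul w v I).symm ▸ rfl⟩⟩
  · rintro J hJ
    obtain ⟨v, hv, rfl⟩ := (Finset.mem_filter.1 hJ).2
    exact Finset.mem_filter.2 ⟨Finset.mem_univ _,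
      ⟨w⁻¹ * v, mul_mem (inv_mem hw) hv, (permFA_mul w⁻¹ v I).symm ▸ rfl⟩⟩
  · intro J _; exact permFA_inv_cancel w J
  · intro J _; exact permFA_cancel_inv w J
  · intro J _; rfl

/-- A canonical (lower) representative for each orbit. -/
noncomputable def repFA (J : FA n) : FAK n K hK :=
  ⟨(permFA n (exists_lowerK_rep hK J).choose J).1,
   ⟨(permFA n (exists_lowerK_rep hK J).choose J).2,
    (exists_lowerK_rep hK J).choose_spec.2⟩⟩

lemma repFA_orbit (J : FA n) :
    ∃ w ∈ SK n K hK, permFA n w (⟨(repFA hK J).1, (repFA hK J).2.1⟩ : FA n) = J := by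
  have h0 : (⟨(repFA hK J).1, (repFA hK J).2.1⟩ : FA n)
      = permFA n (exists_lowerK_rep hK J).choose J := Subtype.ext rfl
  refine ⟨(exists_lowerK_rep hK J).choose⁻¹,
    inv_mem (exists_lowerK_rep hK J).choose_spec.1, ?_⟩
  rw [h0, permFA_inv_cancel]

lemma orbit_iff_rep (I : FAK n K hK) (J : FA n) :
    (∃ w ∈ SK n K hK, permFA n w (⟨I.1, I.2.1⟩ : FA n) = J) ↔ repFA hK J = I := by
  constructor
  · rintro ⟨w, hw, hwJ⟩
    apply Subtype.ext
    apply lowerK_unique hK (repFA hK J).2.2 I.2.2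
    intro x
    have h1 : (repFA hK J).1 = J.1.image ⇑(exists_lowerK_rep hK J).choose := rfl
    rw [h1, delta_image hK (exists_lowerK_rep hK J).choose_spec.1]
    rw [← hwJ]
    show delta hK ((⟨I.1, I.2.1⟩ : FA n).1.image ⇑w) x = delta hK I.1 x
    exact delta_image hK hw _ x
  · rintro rfl
    exact repFA_orbit hK J

lemma sum_partition {M : Type*} [AddCommMonoid M] (f : FA n → M) :
    (∑ I : FAK n K hK, ∑ J ∈ Finset.univ.filter
        (fun J : FA n => ∃ w ∈ SK n K hK, permFA n w (⟨I.1, I.2.1⟩ : FA n) = J), f J)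
      = ∑ J : FA n, f J := by
  have hfe : ∀ I : FAK n K hK, (Finset.univ.filter
      (fun J : FA n => ∃ w ∈ SK n K hK, permFA n w (⟨I.1, I.2.1⟩ : FA n) = J))
      = Finset.univ.filter (fun J : FA n => repFA hK J = I) := by
    intro I
    apply Finset.filter_congr
    intro J _
    exact orbit_iff_rep hK I J
  rw [Finset.sum_congr rfl (fun I _ => by rw [hfe I])]
  exact Finset.sum_fiberwise Finset.univ (repFA hK) f

end PermutohedronA

namespace PermutohedronA

open scoped Classical

variable {n : ℕ} {K : Finset ℕ} (hK : ∀ k ∈ K, k + 1 < n)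

/-- The lift of `φ(y_k)` to the polynomial ring. -/
def Ypoly (kk : {k : ℕ // k ∈ K}) : MvPolynomial (FA n) ℚ :=
  ∑ I : FAK n K hK,
    ∑ J ∈ Finset.univ.filter
        (fun J : FA n => ∃ w ∈ SK n K hK, permFA n w (⟨I.1, I.2.1⟩ : FA n) = J),
      ((((I.1.filter (fun i : Fin n => (i : ℕ) ≤ kk.1)).card : ℚ) -
        ((J.1.filter (fun i : Fin n => (i : ℕ) ≤ kk.1)).card : ℚ)) • X J)

lemma acard_eq_sum (kv : ℕ) (J : Finset (Fin n)) :
    ((J.filter (fun i : Fin n => (i : ℕ) ≤ kv)).card : ℚ)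
      = ∑ i ∈ J, (if (i : ℕ) ≤ kv then (1 : ℚ) else 0) := by
  rw [Finset.card_filter]
  push_cast
  rfl

lemma acard_image_eq_sum (kv : ℕ) (J : Finset (Fin n)) (σ : Equiv.Perm (Fin n)) :
    (((J.image ⇑σ).filter (fun i : Fin n => (i : ℕ) ≤ kv)).card : ℚ)
      = ∑ i ∈ J, (if ((σ i : Fin n) : ℕ) ≤ kv then (1 : ℚ) else 0) := by
  rw [acard_eq_sum]
  exact Finset.sum_image (fun x _ y _ h => σ.injective h)

lemma acard_diff_ne {j kv : ℕ} (hj1 : j + 1 < n) (hne : j ≠ kv) (J : Finset (Fin n)) :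
    ((J.filter (fun i : Fin n => (i : ℕ) ≤ kv)).card : ℚ)
      - (((J.image ⇑(Equiv.swap (⟨j, Nat.lt_of_succ_lt hj1⟩ : Fin n) ⟨j + 1, hj1⟩)).filter
          (fun i : Fin n => (i : ℕ) ≤ kv)).card : ℚ) = 0 := by
  rw [acard_eq_sum, acard_image_eq_sum, ← Finset.sum_sub_distrib]
  apply Finset.sum_eq_zero
  intro i _
  rcases eq_or_ne i ⟨j, Nat.lt_of_succ_lt hj1⟩ with rfl | hia
  · rw [Equiv.swap_apply_left]
    show (if j ≤ kv then (1 : ℚ) else 0) - (if j + 1 ≤ kv then (1 : ℚ) else 0) = 0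
    split_ifs <;> first | (exfalso; omega) | ring
  · rcases eq_or_ne i ⟨j + 1, hj1⟩ with rfl | hib
    · rw [Equiv.swap_apply_right]
      show (if j + 1 ≤ kv then (1 : ℚ) else 0) - (if j ≤ kv then (1 : ℚ) else 0) = 0
      split_ifs <;> first | (exfalso; omega) | ring
    · rw [Equiv.swap_apply_of_ne_of_ne hia hib, sub_self]

lemma acard_diff_eq {kv : ℕ} (hk1 : kv + 1 < n) (J : Finset (Fin n)) :
    ((J.filter (fun i : Fin n => (i : ℕ) ≤ kv)).card : ℚ)
      - (((J.image ⇑(Equiv.swap (⟨kv, Nat.lt_of_succ_lt hk1⟩ : Fin n) ⟨kv + 1, hk1⟩)).filter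
          (fun i : Fin n => (i : ℕ) ≤ kv)).card : ℚ)
    = (if (⟨kv, Nat.lt_of_succ_lt hk1⟩ : Fin n) ∈ J then (1 : ℚ) else 0)
      - (if (⟨kv + 1, hk1⟩ : Fin n) ∈ J then (1 : ℚ) else 0) := by
  rw [acard_eq_sum, acard_image_eq_sum, ← Finset.sum_sub_distrib]
  have hab : (⟨kv, Nat.lt_of_succ_lt hk1⟩ : Fin n) ≠ ⟨kv + 1, hk1⟩ := by
    simp [Fin.ext_iff]
  have hfun : ∀ i ∈ J,
      (if (i : ℕ) ≤ kv then (1 : ℚ) else 0)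
        - (if ((Equiv.swap (⟨kv, Nat.lt_of_succ_lt hk1⟩ : Fin n) ⟨kv + 1, hk1⟩ i : Fin n) : ℕ)
            ≤ kv then (1 : ℚ) else 0)
      = (if i = ⟨kv, Nat.lt_of_succ_lt hk1⟩ then (1 : ℚ) else 0)
        + (if i = ⟨kv + 1, hk1⟩ then (-1 : ℚ) else 0) := by
    intro i _
    rcases eq_or_ne i ⟨kv, Nat.lt_of_succ_lt hk1⟩ with rfl | hia
    · rw [Equiv.swap_apply_left, if_pos rfl, if_neg hab]
      show (if kv ≤ kv then (1 : ℚ) else 0) - (if kv + 1 ≤ kv then (1 : ℚ) else 0) = 1 + 0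
      rw [if_pos (le_refl kv), if_neg (by omega)]
      ring
    · rcases eq_or_ne i ⟨kv + 1, hk1⟩ with rfl | hib
      · rw [Equiv.swap_apply_right]
        have h1 : (⟨kv + 1, hk1⟩ : Fin n) ≠ ⟨kv, Nat.lt_of_succ_lt hk1⟩ := fun h => hab h.symm
        rw [if_neg h1, if_pos rfl]
        show (if kv + 1 ≤ kv then (1 : ℚ) else 0) - (if kv ≤ kv then (1 : ℚ) else 0) = 0 + (-1)
        rw [if_pos (le_refl kv), if_neg (by omega : ¬ kv + 1 ≤ kv)]
        ring
      · rw [Equiv.swap_apply_of_ne_of_ne hia hib, sub_self, if_neg hia, if_neg hib]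
        ring
  rw [Finset.sum_congr rfl hfun, Finset.sum_add_distrib,
    Finset.sum_ite_eq' J (⟨kv, Nat.lt_of_succ_lt hk1⟩ : Fin n) (fun _ => (1 : ℚ)),
    Finset.sum_ite_eq' J (⟨kv + 1, hk1⟩ : Fin n) (fun _ => (-1 : ℚ))]
  split_ifs <;> ring

lemma rename_Ypoly_gen {j : ℕ} (hj : j ∈ K) (kk : {k : ℕ // k ∈ K}) :
    MvPolynomial.rename
        (permFA n (Equiv.swap (⟨j, Nat.lt_of_succ_lt (hK j hj)⟩ : Fin n) ⟨j + 1, hK j hj⟩))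
        (Ypoly hK kk) - Ypoly hK kk ∈ Iideal n ⊔ Jideal n := by
  obtain ⟨kv, hkv⟩ := kk
  set σ := Equiv.swap (⟨j, Nat.lt_of_succ_lt (hK j hj)⟩ : Fin n) ⟨j + 1, hK j hj⟩ with hσ
  have hσK : σ ∈ SK n K hK := swap_mem_SK hK hj
  have hσσ : ∀ J : FA n, permFA n σ (permFA n σ J) = J := by
    intro J
    rw [← permFA_mul, show σ * σ = 1 from Equiv.swap_mul_self _ _]
    exact permFA_one J
  have hren : MvPolynomial.rename (permFA n σ) (Ypoly hK ⟨kv, hkv⟩)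
      = ∑ I : FAK n K hK, ∑ J ∈ Finset.univ.filter
          (fun J : FA n => ∃ w ∈ SK n K hK, permFA n w (⟨I.1, I.2.1⟩ : FA n) = J),
          ((((I.1.filter (fun i : Fin n => (i : ℕ) ≤ kv)).card : ℚ) -
            (((permFA n σ J).1.filter (fun i : Fin n => (i : ℕ) ≤ kv)).card : ℚ)) • X J) := by
    rw [Ypoly, map_sum]
    refine Finset.sum_congr rfl fun I _ => ?_
    rw [map_sum]
    rw [Finset.sum_congr rfl (fun (J : FA n) _ => by
      rw [map_smul, MvPolynomial.rename_X])]
    refine Finset.sum_nbij' (fun J => permFA n σ J) (fun J => permFA n σ J) ?_ ?_ ?_ ?_ ?_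
    · rintro J hJ
      obtain ⟨v, hv, rfl⟩ := (Finset.mem_filter.1 hJ).2
      exact Finset.mem_filter.2 ⟨Finset.mem_univ _,
        ⟨σ * v, mul_mem hσK hv, (permFA_mul σ v _).symm ▸ rfl⟩⟩
    · rintro J hJ
      obtain ⟨v, hv, rfl⟩ := (Finset.mem_filter.1 hJ).2
      exact Finset.mem_filter.2 ⟨Finset.mem_univ _,
        ⟨σ * v, mul_mem hσK hv, (permFA_mul σ v _).symm ▸ rfl⟩⟩
    · intro J _; exact hσσ J
    · intro J _; exact hσσ J
    · intro J _
      rw [hσσ J]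
  have hdiff : MvPolynomial.rename (permFA n σ) (Ypoly hK ⟨kv, hkv⟩) - Ypoly hK ⟨kv, hkv⟩
      = ∑ I : FAK n K hK, ∑ J ∈ Finset.univ.filter
          (fun J : FA n => ∃ w ∈ SK n K hK, permFA n w (⟨I.1, I.2.1⟩ : FA n) = J),
          ((((J.1.filter (fun i : Fin n => (i : ℕ) ≤ kv)).card : ℚ) -
            (((permFA n σ J).1.filter (fun i : Fin n => (i : ℕ) ≤ kv)).card : ℚ)) • X J) := by
    rw [hren, Ypoly, ← Finset.sum_sub_distrib]
    refine Finset.sum_congr rfl fun I _ => ?_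
    rw [← Finset.sum_sub_distrib]
    refine Finset.sum_congr rfl fun J _ => ?_
    rw [← sub_smul]
    congr 1
    ring
  rcases eq_or_ne j kv with hjk | hne
  · -- j = k : the difference is θ_k
    subst hjk
    have hco : ∀ J : FA n,
        (((J.1.filter (fun i : Fin n => (i : ℕ) ≤ j)).card : ℚ) -
          (((permFA n σ J).1.filter (fun i : Fin n => (i : ℕ) ≤ j)).card : ℚ))
        = (if (⟨j, Nat.lt_of_succ_lt (hK j hj)⟩ : Fin n) ∈ J.1 then (1 : ℚ) else 0)
          - (if (⟨j + 1, hK j hj⟩ : Fin n) ∈ J.1 then (1 : ℚ) else 0) := fun J =>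
      acard_diff_eq (hK j hj) J.1
    have hsum1 : (∑ I : FAK n K hK, ∑ J ∈ Finset.univ.filter
          (fun J : FA n => ∃ w ∈ SK n K hK, permFA n w (⟨I.1, I.2.1⟩ : FA n) = J),
          ((((J.1.filter (fun i : Fin n => (i : ℕ) ≤ j)).card : ℚ) -
            (((permFA n σ J).1.filter (fun i : Fin n => (i : ℕ) ≤ j)).card : ℚ)) • X J))
        = ∑ I : FAK n K hK, ∑ J ∈ Finset.univ.filter
            (fun J : FA n => ∃ w ∈ SK n K hK, permFA n w (⟨I.1, I.2.1⟩ : FA n) = J),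
            (((if (⟨j, Nat.lt_of_succ_lt (hK j hj)⟩ : Fin n) ∈ J.1 then (1 : ℚ) else 0)
              - (if (⟨j + 1, hK j hj⟩ : Fin n) ∈ J.1 then (1 : ℚ) else 0))
              • (X J : MvPolynomial (FA n) ℚ)) := by
      refine Finset.sum_congr rfl fun I _ => Finset.sum_congr rfl fun J _ => ?_
      rw [hco J]
    have hsum3 : (∑ I : FAK n K hK, ∑ J ∈ Finset.univ.filter
            (fun J : FA n => ∃ w ∈ SK n K hK, permFA n w (⟨I.1, I.2.1⟩ : FA n) = J),
            (((if (⟨j, Nat.lt_of_succ_lt (hK j hj)⟩ : Fin n) ∈ J.1 then (1 : ℚ) else 0)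
              - (if (⟨j + 1, hK j hj⟩ : Fin n) ∈ J.1 then (1 : ℚ) else 0))
              • (X J : MvPolynomial (FA n) ℚ)))
        = theta n j (hK j hj) := sum_partition hK _
    rw [hdiff, hsum1, hsum3]
    exact Ideal.mem_sup_left (Ideal.subset_span ⟨j, hK j hj, rfl⟩)
  · -- j ≠ k : the difference is zero
    have hzero : (∑ I : FAK n K hK, ∑ J ∈ Finset.univ.filter
          (fun J : FA n => ∃ w ∈ SK n K hK, permFA n w (⟨I.1, I.2.1⟩ : FA n) = J),
          ((((J.1.filter (fun i : Fin n => (i : ℕ) ≤ kv)).card : ℚ) -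
            (((permFA n σ J).1.filter (fun i : Fin n => (i : ℕ) ≤ kv)).card : ℚ))
            • (X J : MvPolynomial (FA n) ℚ)))
        = 0 := by
      apply Finset.sum_eq_zero
      intro I _
      apply Finset.sum_eq_zero
      intro J _
      rw [show (((J.1.filter (fun i : Fin n => (i : ℕ) ≤ kv)).card : ℚ) -
            (((permFA n σ J).1.filter (fun i : Fin n => (i : ℕ) ≤ kv)).card : ℚ)) = 0 from
          acard_diff_ne (hK j hj) hne J.1, zero_smul]
    rw [hdiff, hzero]
    exact zero_mem _

lemma Phi_Ypoly (kk : {k : ℕ // k ∈ K}) : ∀ w ∈ SK n K hK,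
    Phi n w (Ideal.Quotient.mk (Iideal n ⊔ Jideal n) (Ypoly hK kk))
      = Ideal.Quotient.mk (Iideal n ⊔ Jideal n) (Ypoly hK kk) := by
  apply phi_fixed_of_gen hK
  rintro σ ⟨j, hj, rfl⟩
  rw [Phi_mk, Ideal.Quotient.eq]
  exact rename_Ypoly_gen hK hj kk

lemma Phi_orbitSum (I : FA n) : ∀ w ∈ SK n K hK,
    Phi n w (Ideal.Quotient.mk (Iideal n ⊔ Jideal n) (orbitSum n K hK I))
      = Ideal.Quotient.mk (Iideal n ⊔ Jideal n) (orbitSum n K hK I) := by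
  intro w hw
  rw [Phi_mk, rename_orbitSum hK hw]

end PermutohedronA

namespace PermutohedronA

open scoped Classical

variable {n : ℕ} {K : Finset ℕ} (hK : ∀ k ∈ K, k + 1 < n)

lemma mk_qsmul (c : ℚ) (p : MvPolynomial (FA n) ℚ) :
    Ideal.Quotient.mk (Iideal n ⊔ Jideal n) (c • p)
      = c • Ideal.Quotient.mk (Iideal n ⊔ Jideal n) p := by
  rw [show Ideal.Quotient.mk (Iideal n ⊔ Jideal n) (c • p)
      = Ideal.Quotient.mkₐ ℚ (Iideal n ⊔ Jideal n) (c • p) from rfl, map_smul]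
  rfl

lemma range_le_inv (q : MvPolynomial (VarK n K hK) ℚ) :
    (MvPolynomial.aeval (phiMap n K hK) :
        MvPolynomial (VarK n K hK) ℚ →ₐ[ℚ]
          (MvPolynomial (FA n) ℚ ⧸ (Iideal n ⊔ Jideal n))) q ∈ invAlg hK := by
  induction q using MvPolynomial.induction_on with
  | C a => rw [MvPolynomial.aeval_C]; exact Subalgebra.algebraMap_mem _ a
  | add p q hp hq => rw [map_add]; exact add_mem hp hq
  | mul_X p i hp =>
    rw [map_mul, MvPolynomial.aeval_X]
    refine mul_mem hp ?_
    cases i with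
    | inl I =>
      have hdef : phiMap n K hK (Sum.inl I)
          = Ideal.Quotient.mk (Iideal n ⊔ Jideal n) (orbitSum n K hK ⟨I.1, I.2.1⟩) := rfl
      rw [hdef]
      exact (mem_invAlg hK).2 (Phi_orbitSum hK _)
    | inr kk =>
      have hdef : phiMap n K hK (Sum.inr kk)
          = Ideal.Quotient.mk (Iideal n ⊔ Jideal n) (Ypoly hK kk) := rfl
      rw [hdef]
      exact (mem_invAlg hK).2 (Phi_Ypoly hK kk)

lemma inv_le_range {x : MvPolynomial (FA n) ℚ ⧸ (Iideal n ⊔ Jideal n)}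
    (hx : x ∈ invAlg hK) :
    x ∈ (MvPolynomial.aeval (phiMap n K hK) :
        MvPolynomial (VarK n K hK) ℚ →ₐ[ℚ]
          (MvPolynomial (FA n) ℚ ⧸ (Iideal n ⊔ Jideal n))).range := by
  obtain ⟨p, rfl⟩ := Ideal.Quotient.mk_surjective x
  have hpoly : (∑ w : SK n K hK, MvPolynomial.rename (permFA n ↑w) p)
      = ∑ d ∈ p.support, MvPolynomial.coeff d p • Psum hK d := by
    calc (∑ w : SK n K hK, MvPolynomial.rename (permFA n ↑w) p)
        = ∑ w : SK n K hK, ∑ d ∈ p.support,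
            MvPolynomial.monomial (actE ↑w d) (MvPolynomial.coeff d p) := by
          refine Finset.sum_congr rfl fun w _ => ?_
          conv_lhs => rw [MvPolynomial.as_sum p]
          rw [map_sum]
          exact Finset.sum_congr rfl fun d _ => MvPolynomial.rename_monomial _ _ _
      _ = ∑ d ∈ p.support, ∑ w : SK n K hK,
            MvPolynomial.monomial (actE ↑w d) (MvPolynomial.coeff d p) := Finset.sum_comm
      _ = ∑ d ∈ p.support, MvPolynomial.coeff d p • Psum hK d := by
          refine Finset.sum_congr rfl fun d _ => ?_
          rw [Psum, Finset.smul_sum]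
          exact Finset.sum_congr rfl fun w _ => by
            rw [MvPolynomial.smul_monomial, smul_eq_mul, mul_one]
  have hsum : (Fintype.card (SK n K hK)) •
        Ideal.Quotient.mk (Iideal n ⊔ Jideal n) p
      = ∑ d ∈ p.support, MvPolynomial.coeff d p •
          Ideal.Quotient.mk (Iideal n ⊔ Jideal n) (Psum hK d) := by
    calc (Fintype.card (SK n K hK)) • Ideal.Quotient.mk (Iideal n ⊔ Jideal n) p
        = ∑ w : SK n K hK, Phi n ↑w (Ideal.Quotient.mk (Iideal n ⊔ Jideal n) p) := by
          rw [Finset.sum_congr rfl (fun (w : SK n K hK) _ => (mem_invAlg hK).1 hx ↑w w.property), Finset.sum_const,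
            Finset.card_univ]
      _ = Ideal.Quotient.mk (Iideal n ⊔ Jideal n)
            (∑ w : SK n K hK, MvPolynomial.rename (permFA n ↑w) p) := by
          rw [map_sum]
          exact Finset.sum_congr rfl fun w _ => Phi_mk _ _
      _ = ∑ d ∈ p.support, MvPolynomial.coeff d p •
            Ideal.Quotient.mk (Iideal n ⊔ Jideal n) (Psum hK d) := by
          rw [hpoly, map_sum]
          exact Finset.sum_congr rfl fun d _ => mk_qsmul _ _
  have hmem : (Fintype.card (SK n K hK)) • Ideal.Quotient.mk (Iideal n ⊔ Jideal n) p
      ∈ (MvPolynomial.aeval (phiMap n K hK) :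
          MvPolynomial (VarK n K hK) ℚ →ₐ[ℚ]
            (MvPolynomial (FA n) ℚ ⧸ (Iideal n ⊔ Jideal n))).range := by
    rw [hsum]
    exact sum_mem fun d _ =>
      Subalgebra.smul_mem _ (mk_Psum_mem_range hK (degE d) d le_rfl) _
  have hcard : ((Fintype.card (SK n K hK) : ℚ)) ≠ 0 := by
    have h0 : 0 < Fintype.card (SK n K hK) := Fintype.card_pos
    exact_mod_cast h0.ne'
  have h2 := Subalgebra.smul_mem _ hmem ((Fintype.card (SK n K hK) : ℚ))⁻¹
  rwa [← Nat.cast_smul_eq_nsmul ℚ, inv_smul_smul₀ hcard] at h2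

end PermutohedronA


open PermutohedronA MvPolynomial in
/-- Lemma 5.7: the ideal `𝓘 ⊔ 𝓙` is stable under the `𝔖_n`-action (so `𝔖_K`
acts on the quotient `A`), and the image of `φ = aeval (phiMap)` is exactly the
invariant subalgebra `A^{𝔖_K}` (an element is invariant iff every lift has all
its `𝔖_K`-translates mapping to it in the quotient). -/
theorem statement14 (n : ℕ) (hn : 2 ≤ n) (K : Finset ℕ) (hK : ∀ k ∈ K, k + 1 < n) :
    (∀ w : Equiv.Perm (Fin n), ∀ p ∈ Iideal n ⊔ Jideal n,
      MvPolynomial.rename (permFA n w) p ∈ Iideal n ⊔ Jideal n) ∧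
    Set.range ⇑(MvPolynomial.aeval (phiMap n K hK) :
        MvPolynomial (VarK n K hK) ℚ →ₐ[ℚ]
          (MvPolynomial (FA n) ℚ ⧸ (Iideal n ⊔ Jideal n))) =
    {x | ∀ w ∈ SK n K hK, ∀ p : MvPolynomial (FA n) ℚ,
      Ideal.Quotient.mk (Iideal n ⊔ Jideal n) p = x →
      Ideal.Quotient.mk (Iideal n ⊔ Jideal n)
        (MvPolynomial.rename (permFA n w) p) = x} := by
  constructor
  · intro w p hp
    exact ideal_stable w hp
  · ext x
    constructor
    · rintro ⟨q, rfl⟩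
      intro w hw p hp
      have hx := range_le_inv hK q
      rw [← Phi_mk, hp]
      exact hx w hw
    · intro hxmem
      have hxinv : x ∈ invAlg hK := by
        rw [mem_invAlg]
        intro w hw
        obtain ⟨p, hp⟩ := Ideal.Quotient.mk_surjective x
        rw [← hp, Phi_mk, hp]
        exact hxmem w hw p hp
      have h3 := inv_le_range hK hxinv
      rw [← AlgHom.coe_range]
      exact h3
end
end

section
/- Proposition B.2 (position of facets relative to reflecting hyperplanes, type B): Let k ∈ [n] and I ∈ 𝔉_{B_n}. Then: (1) F(I) ∩ H(k) ≠ ∅ if and only if s_k(I) = I (I is s_k-invariant as a subset of {1,…,2n}); (2) F(I) ⊆ H(k)^< if and only if: for 1 ≤ k ≤ n−1, either (k ∈ I and k+1 ∉ I) or (\overline{k+1} ∈ I and k̄ ∉ I); and for k = n, n ∈ I and n̄ ∉ I. -/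
/-!
Type `B_n` setup.  Coordinates are 0-indexed: the paper's index
`i ∈ {1, …, 2n}` corresponds to `i - 1 : Fin (2*n)`, and the bar involution
`ī = 2n + 1 − i` corresponds to `Fin.rev`.
-/

noncomputable section

namespace WeightB

/-- The ambient space `E = {x ∈ ℝ^{2n} : x_i + x_{ī} = 0 for i ∈ [n]}`. -/
def E (n : ℕ) : Set (Fin (2 * n) → ℝ) :=
  {x | ∀ i : Fin (2 * n), (i : ℕ) < n → x i + x i.rev = 0}

/-- A signed subset: `|I ∩ {i, ī}| ≤ 1` for all `i ∈ [n]`, and `I` nonempty. -/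
def Signed (n : ℕ) (I : Finset (Fin (2 * n))) : Prop :=
  I.Nonempty ∧ ∀ i : Fin (2 * n), (i : ℕ) < n → ¬(i ∈ I ∧ i.rev ∈ I)

/-- The hyperoctahedral group `W_{B_n}` of signed permutations. -/
def WB (n : ℕ) : Set (Equiv.Perm (Fin (2 * n))) :=
  {u | ∀ i, u i.rev = (u i).rev}

/-- The vertex of the weight polytope corresponding to `u`. -/
def ptB (n : ℕ) (a : Fin (2 * n) → ℝ) (u : Equiv.Perm (Fin (2 * n))) :
    Fin (2 * n) → ℝ :=
  fun i => a (u i)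

/-- The weight polytope `P_{B_n}`: convex hull of the `W_{B_n}`-orbit of `a`. -/
def PB (n : ℕ) (a : Fin (2 * n) → ℝ) : Set (Fin (2 * n) → ℝ) :=
  convexHull ℝ {p | ∃ u ∈ WB n, p = ptB n a u}

/-- The facet `F(I)` for a signed subset `I`. -/
def FB (n : ℕ) (a : Fin (2 * n) → ℝ) (I : Finset (Fin (2 * n))) :
    Set (Fin (2 * n) → ℝ) :=
  {x ∈ PB n a |
    ∑ i ∈ I, x i =
      ∑ i ∈ Finset.univ.filter (fun i : Fin (2 * n) => (i : ℕ) < I.card), a i}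

/-- The simple reflection `s_k` (0-indexed `k < n`): for `k + 1 < n` it is
`(k, k+1)(k̄, \overline{k+1})`; for `k = n - 1` it is `(n-1, \overline{n-1})`,
i.e. the paper's `s_n = (n, n̄)`. -/
def sB (n : ℕ) (k : ℕ) (hk : k < n) : Equiv.Perm (Fin (2 * n)) :=
  if h : k + 1 < n then
    (Equiv.swap ⟨k, by omega⟩ ⟨k + 1, by omega⟩) *
      (Equiv.swap (Fin.rev ⟨k, by omega⟩) (Fin.rev ⟨k + 1, by omega⟩))
  else
    Equiv.swap ⟨k, by omega⟩ (Fin.rev ⟨k, by omega⟩)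

/-- The reflecting hyperplane `H(k)`. -/
def HB (n : ℕ) (k : ℕ) (hk : k < n) : Set (Fin (2 * n) → ℝ) :=
  if h : k + 1 < n then {x ∈ E n | x ⟨k, by omega⟩ = x ⟨k + 1, by omega⟩}
  else {x ∈ E n | x ⟨k, by omega⟩ = 0}

/-- The open half-space `H(k)^<`. -/
def HBlt (n : ℕ) (k : ℕ) (hk : k < n) : Set (Fin (2 * n) → ℝ) :=
  if h : k + 1 < n then {x ∈ E n | x ⟨k, by omega⟩ < x ⟨k + 1, by omega⟩}
  else {x ∈ E n | x ⟨k, by omega⟩ < 0}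

end WeightB

namespace WeightB

/-- The condition of Proposition B.2(2): `F(I) ⊆ H(k)^<`. -/
def condB (n : ℕ) (k : ℕ) (hk : k < n) (I : Finset (Fin (2 * n))) : Prop :=
  if h : k + 1 < n then
    (((⟨k, by omega⟩ : Fin (2 * n)) ∈ I ∧ (⟨k + 1, by omega⟩ : Fin (2 * n)) ∉ I) ∨
      (Fin.rev (⟨k + 1, by omega⟩ : Fin (2 * n)) ∈ I ∧
        Fin.rev (⟨k, by omega⟩ : Fin (2 * n)) ∉ I))
  else
    ((⟨k, by omega⟩ : Fin (2 * n)) ∈ I ∧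
      Fin.rev (⟨k, by omega⟩ : Fin (2 * n)) ∉ I)

end WeightB

namespace WeightB
section Aux
variable {n : ℕ}

lemma rev_val (i : Fin (2*n)) : (i.rev : ℕ) = 2*n - (i+1) := Fin.val_rev i

lemma rev_ne (i : Fin (2*n)) : i.rev ≠ i := by
  intro h; have h2 := congrArg Fin.val h; rw [rev_val] at h2; have := i.isLt; omega

lemma rev_lt (i : Fin (2*n)) (h : ¬ ((i:ℕ) < n)) : ((i.rev : ℕ) < n) := by
  have := i.isLt; rw [rev_val]; omega

lemma rev_ge (i : Fin (2*n)) (h : (i:ℕ) < n) : ¬ ((i.rev : ℕ) < n) := by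
  have := i.isLt; rw [rev_val]; omega

lemma val_ne_rev {x y : Fin (2*n)} (hx : (x:ℕ) < n) (hy : (y:ℕ) < n) : x ≠ y.rev := by
  intro h
  have h2 := congrArg Fin.val h
  rw [rev_val] at h2
  have := y.isLt
  omega

lemma pairFree {I : Finset (Fin (2*n))}
    (hI : ∀ i : Fin (2*n), (i : ℕ) < n → ¬(i ∈ I ∧ i.rev ∈ I)) :
    ∀ i : Fin (2*n), ¬(i ∈ I ∧ i.rev ∈ I) := by
  intro i hmem
  by_cases h : (i:ℕ) < n
  · exact hI i h hmem
  · exact hI i.rev (rev_lt i h) ⟨hmem.2, by rw [Fin.rev_rev]; exact hmem.1⟩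

lemma pair_sum {x : Fin (2*n) → ℝ} (hx : x ∈ E n) (i : Fin (2*n)) : x i + x i.rev = 0 := by
  by_cases h : (i:ℕ) < n
  · exact hx i h
  · have := hx i.rev (rev_lt i h); rw [Fin.rev_rev] at this; linarith

lemma filter_lt_succ (m : ℕ) (hm : m < 2*n) :
    (Finset.univ.filter fun i : Fin (2*n) => (i:ℕ) < m + 1)
      = insert ⟨m, hm⟩ (Finset.univ.filter fun i : Fin (2*n) => (i:ℕ) < m) := by
  ext i
  simp only [Finset.mem_filter, Finset.mem_univ, true_and, Finset.mem_insert, Fin.ext_iff]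
  omega

lemma card_filter_lt (m : ℕ) (hm : m ≤ 2*n) :
    (Finset.univ.filter fun i : Fin (2*n) => (i:ℕ) < m).card = m := by
  induction m with
  | zero => simp
  | succ m ih =>
    rw [filter_lt_succ m (by omega), Finset.card_insert_of_notMem (by simp), ih (by omega)]

lemma sum_filter_succ (a : Fin (2*n) → ℝ) (m : ℕ) (hm : m < 2*n) :
    (∑ i ∈ Finset.univ.filter (fun i : Fin (2*n) => (i:ℕ) < m + 1), a i)
      = (∑ i ∈ Finset.univ.filter (fun i : Fin (2*n) => (i:ℕ) < m), a i) + a ⟨m, hm⟩ := by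
  rw [filter_lt_succ m hm, Finset.sum_insert (by simp)]
  ring

section amono
variable {a : Fin (2*n) → ℝ} (haE : a ∈ E n)
  (hmono : ∀ i j : Fin (2 * n), (i : ℕ) < (j : ℕ) → (j : ℕ) < n → a i < a j)
  (haneg : ∀ i : Fin (2 * n), (i : ℕ) < n → a i < 0)

include haE hmono haneg in
lemma a_mono : ∀ i j : Fin (2*n), (i:ℕ) < (j:ℕ) → a i < a j := by
  intro i j hij
  by_cases hj : (j:ℕ) < n
  · exact hmono i j hij hj
  · by_cases hi : (i:ℕ) < n
    · have h1 : a i < 0 := haneg i hi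
      have h2 : a j.rev < 0 := haneg j.rev (rev_lt j hj)
      have h3 := pair_sum haE j
      linarith
    · have hrev : (j.rev : ℕ) < (i.rev : ℕ) := by
        rw [rev_val, rev_val]; have := j.isLt; omega
      have h1 := hmono j.rev i.rev hrev (rev_lt i hi)
      have h2 := pair_sum haE i
      have h3 := pair_sum haE j
      linarith

include haE hmono haneg in
lemma a_mono_le : ∀ i j : Fin (2*n), (i:ℕ) ≤ (j:ℕ) → a i ≤ a j := by
  intro i j hij
  rcases eq_or_lt_of_le hij with h | h
  · rw [Fin.ext_iff.mpr h]
  · exact le_of_lt (a_mono haE hmono haneg i j h)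

end amono

lemma fin_le_apply {m N : ℕ} (g : Fin m → Fin N) (hg : StrictMono g) :
    ∀ i : Fin m, (i:ℕ) ≤ (g i : ℕ) := by
  intro i
  obtain ⟨v, hv⟩ := i
  induction v with
  | zero => exact Nat.zero_le _
  | succ v ih =>
    have hv' : v < m := by omega
    have h1 : v ≤ (g ⟨v, hv'⟩ : ℕ) := ih hv'
    have h2 : (g ⟨v, hv'⟩ : ℕ) < (g ⟨v+1, hv⟩ : ℕ) :=
      Fin.lt_def.mp (hg (by simp [Fin.lt_def]))
    show v + 1 ≤ (g ⟨v+1, hv⟩ : ℕ)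
    omega

lemma sum_ge_sorted (a : Fin (2*n) → ℝ)
    (hle : ∀ i j : Fin (2*n), (i:ℕ) ≤ (j:ℕ) → a i ≤ a j)
    (T : Finset (Fin (2*n))) :
    (∑ i ∈ Finset.univ.filter (fun i : Fin (2*n) => (i:ℕ) < T.card), a i) ≤ ∑ i ∈ T, a i := by
  classical
  set m := T.card with hm
  have hmle : m ≤ 2*n := by
    have := Finset.card_le_univ T
    simpa [hm] using this
  set e := T.orderEmbOfFin hm.symm with he
  have h1 : ∑ i ∈ T, a i = ∑ i : Fin m, a (e i) := by
    rw [← Finset.sum_image (g := fun i => e i) (f := a) (s := Finset.univ)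
      (by intro x _ y _ hxy; exact e.injective hxy)]
    congr 1
    apply Finset.coe_injective
    rw [Finset.coe_image, Finset.coe_univ, Set.image_univ]
    exact (Finset.range_orderEmbOfFin T hm.symm).symm
  have h2 : (∑ i ∈ Finset.univ.filter (fun i : Fin (2*n) => (i:ℕ) < m), a i)
      = ∑ i : Fin m, a (Fin.castLE hmle i) := by
    rw [← Finset.sum_image (g := fun i => Fin.castLE hmle i) (f := a) (s := Finset.univ)
      (by intro x _ y _ hxy; exact Fin.castLE_injective hmle hxy)]
    congr 1
    ext j
    simp only [Finset.mem_filter, Finset.mem_univ, true_and, Finset.mem_image]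
    constructor
    · intro hj; exact ⟨⟨j.val, hj⟩, rfl⟩
    · rintro ⟨i, rfl⟩; exact i.isLt
  rw [h1, h2]
  apply Finset.sum_le_sum
  intro i _
  apply hle
  simpa using fin_le_apply e e.strictMono i

def pr (i : Fin (2*n)) : Fin (2*n) := if (i:ℕ) < n then i else i.rev

lemma pr_le (i : Fin (2*n)) : ((pr i : ℕ)) ≤ (i:ℕ) := by
  unfold pr
  split
  · exact le_refl _
  · rw [rev_val]; have := i.isLt; omega

lemma pr_injOn {S : Finset (Fin (2*n))} (hS : ∀ i : Fin (2*n), ¬(i ∈ S ∧ i.rev ∈ S)) :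
    Set.InjOn pr (S : Set (Fin (2*n))) := by
  intro i hi j hj hij
  unfold pr at hij
  split at hij <;> split at hij
  · exact hij
  · exact absurd ⟨hj, by rw [← hij]; exact Finset.mem_coe.mp hi⟩ (hS j)
  · exact absurd ⟨Finset.mem_coe.mp hi, by rw [hij]; exact Finset.mem_coe.mp hj⟩ (hS i)
  · exact Fin.rev_injective hij

lemma sum_signed (a : Fin (2*n) → ℝ)
    (hle : ∀ i j : Fin (2*n), (i:ℕ) ≤ (j:ℕ) → a i ≤ a j)
    (S : Finset (Fin (2*n))) (hS : ∀ i : Fin (2*n), ¬(i ∈ S ∧ i.rev ∈ S)) :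
    (∑ i ∈ Finset.univ.filter (fun i : Fin (2*n) => (i:ℕ) < S.card), a i) ≤ ∑ i ∈ S, a i := by
  classical
  have h1 : ∑ i ∈ S.image pr, a i = ∑ i ∈ S, a (pr i) :=
    Finset.sum_image (fun x hx y hy h => pr_injOn hS hx hy h)
  have h2 : ∑ i ∈ S, a (pr i) ≤ ∑ i ∈ S, a i :=
    Finset.sum_le_sum (fun i _ => hle _ _ (pr_le i))
  have h3 : (S.image pr).card = S.card := Finset.card_image_of_injOn (pr_injOn hS)
  have h4 := sum_ge_sorted a hle (S.image pr)
  rw [h3, h1] at h4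
  linarith

lemma convex_E : Convex ℝ (E n) := by
  intro x hx y hy α β hα hβ hαβ
  intro i hi
  have h1 := hx i hi
  have h2 := hy i hi
  simp only [Pi.add_apply, Pi.smul_apply, smul_eq_mul]
  ring_nf
  nlinarith [h1, h2]

lemma PB_subset_E {a : Fin (2*n) → ℝ} (haE : a ∈ E n) : PB n a ⊆ E n := by
  apply convexHull_min _ convex_E
  rintro p ⟨u, hu, rfl⟩
  intro i hi
  show a (u i) + a (u i.rev) = 0
  rw [hu i]
  exact pair_sum haE (u i)

lemma PB_lower {a : Fin (2*n) → ℝ}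
    (hle : ∀ i j : Fin (2*n), (i:ℕ) ≤ (j:ℕ) → a i ≤ a j)
    (J : Finset (Fin (2*n))) (hJ : ∀ i : Fin (2*n), ¬(i ∈ J ∧ i.rev ∈ J)) :
    ∀ x ∈ PB n a,
      (∑ i ∈ Finset.univ.filter (fun i : Fin (2*n) => (i:ℕ) < J.card), a i) ≤ ∑ j ∈ J, x j := by
  classical
  set c := (∑ i ∈ Finset.univ.filter (fun i : Fin (2*n) => (i:ℕ) < J.card), a i) with hc
  have hconv : Convex ℝ {x : Fin (2*n) → ℝ | c ≤ ∑ j ∈ J, x j} := by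
    have hlin : IsLinearMap ℝ (fun x : Fin (2*n) → ℝ => ∑ j ∈ J, x j) := by
      constructor
      · intro x y; simp [Finset.sum_add_distrib]
      · intro r x; simp [Finset.mul_sum]
    exact convex_halfSpace_ge hlin c
  apply convexHull_min _ hconv
  rintro p ⟨u, hu, rfl⟩
  show c ≤ ∑ j ∈ J, a (u j)
  have himg : ∑ j ∈ J.image u, a j = ∑ j ∈ J, a (u j) :=
    Finset.sum_image (fun x _ y _ h => u.injective h)
  have hcard : (J.image u).card = J.card :=
    Finset.card_image_of_injective _ u.injective
  have hJu : ∀ i : Fin (2*n), ¬(i ∈ J.image u ∧ i.rev ∈ J.image u) := by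
    rintro i ⟨h1, h2⟩
    simp only [Finset.mem_image] at h1 h2
    obtain ⟨j1, hj1, rfl⟩ := h1
    obtain ⟨j2, hj2, hj2e⟩ := h2
    rw [← hu j1] at hj2e
    have : j2 = j1.rev := u.injective hj2e
    exact hJ j1 ⟨hj1, this ▸ hj2⟩
  have := sum_signed a hle (J.image u) hJu
  rw [hcard, himg] at this
  exact this

lemma card_le_n {I : Finset (Fin (2*n))}
    (hI : ∀ i : Fin (2*n), ¬(i ∈ I ∧ i.rev ∈ I)) : I.card ≤ n := by
  classical
  have h1 : I.image pr ⊆ Finset.univ.filter fun i : Fin (2*n) => (i:ℕ) < n := by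
    intro j hj
    simp only [Finset.mem_image] at hj
    obtain ⟨i, _, rfl⟩ := hj
    simp only [Finset.mem_filter, Finset.mem_univ, true_and]
    unfold pr
    split
    · assumption
    · exact rev_lt i (by assumption)
  have h2 := Finset.card_le_card h1
  rw [Finset.card_image_of_injOn (pr_injOn hI), card_filter_lt n (by omega)] at h2
  exact h2

section bounds
variable {a : Fin (2*n) → ℝ} {I : Finset (Fin (2*n))}
  (hle : ∀ i j : Fin (2*n), (i:ℕ) ≤ (j:ℕ) → a i ≤ a j)
  (hIp : ∀ i : Fin (2*n), ¬(i ∈ I ∧ i.rev ∈ I))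
  (hIne : I.Nonempty)
  {x : Fin (2*n) → ℝ} (hx : x ∈ FB n a I)

include hle hIp hIne hx in
lemma coord_le {i : Fin (2*n)} (hi : i ∈ I) (hc : I.card - 1 < 2*n) :
    x i ≤ a ⟨I.card - 1, hc⟩ := by
  classical
  have hm1 : 1 ≤ I.card := Finset.card_pos.mpr hIne
  have hJ : ∀ j : Fin (2*n), ¬(j ∈ I.erase i ∧ j.rev ∈ I.erase i) := by
    intro j ⟨h1, h2⟩
    exact hIp j ⟨Finset.mem_of_mem_erase h1, Finset.mem_of_mem_erase h2⟩
  have h1 := PB_lower hle (I.erase i) hJ x hx.1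
  rw [Finset.card_erase_of_mem hi] at h1
  have h2 : x i + ∑ j ∈ I.erase i, x j = ∑ j ∈ I, x j := Finset.add_sum_erase I x hi
  have h3 := sum_filter_succ a (I.card - 1) hc
  rw [show I.card - 1 + 1 = I.card by omega] at h3
  have h4 := hx.2
  linarith

omit hIne in
include hle hIp hx in
lemma coord_ge {i : Fin (2*n)} (hi : i ∉ I) (hi' : i.rev ∉ I) (hc : I.card < 2*n) :
    a ⟨I.card, hc⟩ ≤ x i := by
  classical
  have hJ : ∀ j : Fin (2*n), ¬(j ∈ insert i I ∧ j.rev ∈ insert i I) := by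
    intro j ⟨h1, h2⟩
    rcases Finset.mem_insert.mp h1 with rfl | h1'
    · rcases Finset.mem_insert.mp h2 with h | h
      · exact rev_ne j h
      · exact hi' h
    · rcases Finset.mem_insert.mp h2 with h | h
      · exact hi' (by rw [← h, Fin.rev_rev]; exact h1')
      · exact hIp j ⟨h1', h⟩
  have h1 := PB_lower hle (insert i I) hJ x hx.1
  rw [Finset.card_insert_of_notMem hi] at h1
  have h2 : ∑ j ∈ insert i I, x j = x i + ∑ j ∈ I, x j := Finset.sum_insert hi
  have h3 := sum_filter_succ a I.card hc
  have h4 := hx.2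
  linarith

end bounds

section helper
variable (hn : 2 ≤ n) {a : Fin (2*n) → ℝ} (haE : a ∈ E n)
  (hmono : ∀ i j : Fin (2 * n), (i : ℕ) < (j : ℕ) → (j : ℕ) < n → a i < a j)
  (haneg : ∀ i : Fin (2 * n), (i : ℕ) < n → a i < 0)
  {I : Finset (Fin (2*n))}
  (hIp : ∀ i : Fin (2*n), ¬(i ∈ I ∧ i.rev ∈ I))
  (hIne : I.Nonempty)
  {x : Fin (2*n) → ℝ} (hx : x ∈ FB n a I)

include hn haE hmono haneg hIp hIne hx in
lemma helper_lt {i j : Fin (2*n)}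
    (hcond : (i ∈ I ∧ j ∉ I) ∨ (j.rev ∈ I ∧ i.rev ∉ I)) : x i < x j := by
  have hle := a_mono_le haE hmono haneg
  have hmono' := a_mono haE hmono haneg
  have hm1 : 1 ≤ I.card := Finset.card_pos.mpr hIne
  have hmn : I.card ≤ n := card_le_n hIp
  have hc1 : I.card - 1 < 2*n := by omega
  have hc2 : I.card < 2*n := by omega
  have hxE : x ∈ E n := PB_subset_E haE hx.1
  have ham1 : a ⟨I.card - 1, hc1⟩ < 0 := haneg _ (show I.card - 1 < n by omega)
  have hamlt : a ⟨I.card - 1, hc1⟩ < a ⟨I.card, hc2⟩ :=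
    hmono' _ _ (show I.card - 1 < I.card by omega)
  rcases hcond with ⟨hiI, hjI⟩ | ⟨hjr, hir⟩
  · have h1 : x i ≤ a ⟨I.card - 1, hc1⟩ := coord_le hle hIp hIne hx hiI hc1
    by_cases hjr : j.rev ∈ I
    · have h2 : x j.rev ≤ a ⟨I.card - 1, hc1⟩ := coord_le hle hIp hIne hx hjr hc1
      have h3 := pair_sum hxE j
      linarith
    · have h2 : a ⟨I.card, hc2⟩ ≤ x j := coord_ge hle hIp hx hjI hjr hc2
      linarith
  · have h1 : x j.rev ≤ a ⟨I.card - 1, hc1⟩ := coord_le hle hIp hIne hx hjr hc1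
    have h2 := pair_sum hxE j
    by_cases hiI : i ∈ I
    · have h3 : x i ≤ a ⟨I.card - 1, hc1⟩ := coord_le hle hIp hIne hx hiI hc1
      linarith
    · have h3 : a ⟨I.card, hc2⟩ ≤ x i.rev :=
        coord_ge hle hIp hx hir (show i.rev.rev ∉ I by rw [Fin.rev_rev]; exact hiI) hc2
      have h4 := pair_sum hxE i
      linarith

end helper

lemma rank_lt_card {S : Finset (Fin (2*n))} {i : Fin (2*n)} (hi : i ∈ S) :
    (S.filter (fun j => j < i)).card < S.card := by
  apply Finset.card_lt_card
  rw [Finset.ssubset_iff_of_subset (Finset.filter_subset _ _)]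
  exact ⟨i, hi, by simp⟩

lemma rank_strictMono {S : Finset (Fin (2*n))} {i i' : Fin (2*n)}
    (hi : i ∈ S) (h : i < i') :
    (S.filter (fun j => j < i)).card < (S.filter (fun j => j < i')).card := by
  apply Finset.card_lt_card
  rw [Finset.ssubset_iff_of_subset
    (by intro x hx
        simp only [Finset.mem_filter] at *
        exact ⟨hx.1, lt_trans hx.2 h⟩)]
  exact ⟨i, Finset.mem_filter.mpr ⟨hi, h⟩, by simp⟩

lemma rank_inj {S : Finset (Fin (2*n))} {i i' : Fin (2*n)}
    (hi : i ∈ S) (hi' : i' ∈ S)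
    (h : (S.filter (fun j => j < i)).card = (S.filter (fun j => j < i')).card) : i = i' := by
  rcases lt_trichotomy i i' with hlt | heq | hgt
  · exact absurd (rank_strictMono hi hlt) (by omega)
  · exact heq
  · exact absurd (rank_strictMono hi' hgt) (by omega)

/-- The rank function used to build the minimizing signed permutation. -/
def rkB (I : Finset (Fin (2*n))) (i : Fin (2*n)) : ℕ :=
  if i ∈ I.image pr then ((I.image pr).filter (fun j => j < i)).card
  else I.card +
    ((((Finset.univ.filter fun j : Fin (2*n) => (j:ℕ) < n)) \ I.image pr).filter
      (fun j => j < i)).card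

def lowB (I : Finset (Fin (2*n))) (i : Fin (2*n)) : Fin (2*n) :=
  ⟨rkB I i % (2*n), Nat.mod_lt _ i.pos⟩

def BB (I : Finset (Fin (2*n))) (j : Fin (2*n)) : Fin (2*n) :=
  if j ∈ I then lowB I j else if j.rev ∈ I then (lowB I j).rev else lowB I j

def fB (I : Finset (Fin (2*n))) (i : Fin (2*n)) : Fin (2*n) :=
  if (i:ℕ) < n then BB I i else (BB I i.rev).rev

section ConstrLemmas
variable {I : Finset (Fin (2*n))}
  (hIp : ∀ i : Fin (2*n), ¬(i ∈ I ∧ i.rev ∈ I))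

lemma prP_sub : I.image pr ⊆ Finset.univ.filter fun j : Fin (2*n) => (j:ℕ) < n := by
  intro j hj
  simp only [Finset.mem_image] at hj
  obtain ⟨i, _, rfl⟩ := hj
  simp only [Finset.mem_filter, Finset.mem_univ, true_and]
  unfold pr
  split
  · assumption
  · exact rev_lt i (by assumption)

include hIp in
lemma prP_card : (I.image pr).card = I.card := Finset.card_image_of_injOn (pr_injOn hIp)

lemma mem_prP {i : Fin (2*n)} :
    i ∈ I.image pr ↔ (i ∈ I ∧ (i:ℕ) < n) ∨ (i.rev ∈ I ∧ (i:ℕ) < n) := by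
  constructor
  · intro hi
    obtain ⟨j, hj, rfl⟩ := Finset.mem_image.mp hi
    by_cases hjn : (j:ℕ) < n
    · left
      simp only [pr]
      rw [if_pos hjn]
      exact ⟨hj, hjn⟩
    · right
      simp only [pr]
      rw [if_neg hjn, Fin.rev_rev]
      exact ⟨hj, rev_lt j hjn⟩
  · rintro (⟨hi, hlt⟩ | ⟨hi, hlt⟩)
    · have h : pr i = i := by simp only [pr]; rw [if_pos hlt]
      rw [← h]; exact Finset.mem_image_of_mem pr hi
    · have h : pr i.rev = i := by
        simp only [pr]
        rw [if_neg (rev_ge i hlt), Fin.rev_rev]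
      rw [← h]; exact Finset.mem_image_of_mem pr hi

include hIp in
lemma rkB_lt_m {i : Fin (2*n)} (hi : i ∈ I.image pr) : rkB I i < I.card := by
  rw [rkB, if_pos hi]
  rw [← prP_card hIp]
  exact rank_lt_card hi

lemma rkB_ge_m {i : Fin (2*n)} (hi : i ∉ I.image pr) : I.card ≤ rkB I i := by
  rw [rkB, if_neg hi]; omega

include hIp in
lemma rkB_lt_n {i : Fin (2*n)} (hi : (i:ℕ) < n) : rkB I i < n := by
  by_cases h : i ∈ I.image pr
  · exact lt_of_lt_of_le (rkB_lt_m hIp h) (card_le_n hIp)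
  · rw [rkB, if_neg h]
    have hQ : i ∈ (Finset.univ.filter fun j : Fin (2*n) => (j:ℕ) < n) \ I.image pr :=
      Finset.mem_sdiff.mpr ⟨by simp [hi], h⟩
    have h1 := rank_lt_card hQ
    have h2 : ((Finset.univ.filter fun j : Fin (2*n) => (j:ℕ) < n) \ I.image pr).card
        = n - I.card := by
      rw [Finset.card_sdiff_of_subset prP_sub, prP_card hIp, card_filter_lt n (by omega)]
    rw [h2] at h1
    have := card_le_n hIp
    omega

include hIp in
lemma rkB_inj {i i' : Fin (2*n)} (hi : (i:ℕ) < n) (hi' : (i':ℕ) < n)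
    (h : rkB I i = rkB I i') : i = i' := by
  by_cases h1 : i ∈ I.image pr <;> by_cases h2 : i' ∈ I.image pr
  · rw [rkB, if_pos h1, rkB, if_pos h2] at h
    exact rank_inj h1 h2 h
  · have := rkB_lt_m hIp h1; have := rkB_ge_m (I := I) h2; omega
  · have := rkB_lt_m hIp h2; have := rkB_ge_m (I := I) h1; omega
  · rw [rkB, if_neg h1, rkB, if_neg h2] at h
    have hQ1 : i ∈ (Finset.univ.filter fun j : Fin (2*n) => (j:ℕ) < n) \ I.image pr :=
      Finset.mem_sdiff.mpr ⟨by simp [hi], h1⟩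
    have hQ2 : i' ∈ (Finset.univ.filter fun j : Fin (2*n) => (j:ℕ) < n) \ I.image pr :=
      Finset.mem_sdiff.mpr ⟨by simp [hi'], h2⟩
    exact rank_inj hQ1 hQ2 (by omega)

include hIp in
lemma lowB_val {i : Fin (2*n)} (hi : (i:ℕ) < n) : (lowB I i : ℕ) = rkB I i := by
  have h1 := rkB_lt_n hIp hi
  show rkB I i % (2*n) = rkB I i
  exact Nat.mod_eq_of_lt (by omega)

include hIp in
lemma lowB_lt {i : Fin (2*n)} (hi : (i:ℕ) < n) : ((lowB I i : ℕ)) < n := by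
  rw [lowB_val hIp hi]; exact rkB_lt_n hIp hi

include hIp in
lemma lowB_inj {i i' : Fin (2*n)} (hi : (i:ℕ) < n) (hi' : (i':ℕ) < n)
    (h : lowB I i = lowB I i') : i = i' := by
  apply rkB_inj hIp hi hi'
  rw [← lowB_val hIp hi, ← lowB_val hIp hi', h]

lemma BB_cases (j : Fin (2*n)) : BB I j = lowB I j ∨ BB I j = (lowB I j).rev := by
  rw [BB]; split
  · exact Or.inl rfl
  · split
    · exact Or.inr rfl
    · exact Or.inl rfl

include hIp in
lemma BB_inj {j j' : Fin (2*n)} (hj : (j:ℕ) < n) (hj' : (j':ℕ) < n)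
    (h : BB I j = BB I j') : j = j' := by
  rcases BB_cases (I := I) j with h1 | h1 <;> rcases BB_cases (I := I) j' with h2 | h2 <;>
    rw [h1, h2] at h
  · exact lowB_inj hIp hj hj' h
  · exact absurd (h ▸ lowB_lt hIp hj) (rev_ge _ (lowB_lt hIp hj'))
  · exact absurd (h.symm ▸ lowB_lt hIp hj') (rev_ge _ (lowB_lt hIp hj))
  · exact lowB_inj hIp hj hj' (Fin.rev_injective h)

include hIp in
lemma BB_ne_rev {j j' : Fin (2*n)} (hj : (j:ℕ) < n) (hj' : (j':ℕ) < n) :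
    BB I j ≠ (BB I j').rev := by
  intro h
  rcases BB_cases (I := I) j with h1 | h1 <;> rcases BB_cases (I := I) j' with h2 | h2 <;>
    rw [h1, h2] at h
  · exact val_ne_rev (lowB_lt hIp hj) (lowB_lt hIp hj') h
  · rw [Fin.rev_rev] at h
    have hjj := lowB_inj hIp hj hj' h
    subst hjj
    exact rev_ne _ (h1.symm.trans h2).symm
  · have hjj := lowB_inj hIp hj hj' (Fin.rev_injective h)
    subst hjj
    exact rev_ne _ (h2.symm.trans h1).symm
  · rw [Fin.rev_rev] at h
    exact val_ne_rev (lowB_lt hIp hj') (lowB_lt hIp hj) h.symm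

lemma fB_rev (i : Fin (2*n)) : fB I i.rev = (fB I i).rev := by
  by_cases hi : (i:ℕ) < n
  · rw [fB, if_neg (rev_ge i hi), Fin.rev_rev, fB, if_pos hi]
  · rw [fB, if_pos (rev_lt i hi), fB, if_neg hi, Fin.rev_rev]

include hIp in
lemma fB_inj : Function.Injective (fB I) := by
  intro i i' h
  by_cases hi : (i:ℕ) < n <;> by_cases hi' : (i':ℕ) < n <;> simp only [fB] at h
  · rw [if_pos hi, if_pos hi'] at h
    exact BB_inj hIp hi hi' h
  · rw [if_pos hi, if_neg hi'] at h
    exact absurd h (BB_ne_rev hIp hi (rev_lt i' hi'))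
  · rw [if_neg hi, if_pos hi'] at h
    exact absurd h.symm (BB_ne_rev hIp hi' (rev_lt i hi))
  · rw [if_neg hi, if_neg hi'] at h
    have := BB_inj hIp (rev_lt i hi) (rev_lt i' hi') (Fin.rev_injective h)
    exact Fin.rev_injective this

include hIp in
lemma fB_mem (i : Fin (2*n)) : ((fB I i : ℕ) < I.card ↔ i ∈ I) := by
  by_cases hi : (i:ℕ) < n
  · simp only [fB]
    rw [if_pos hi]
    by_cases hiI : i ∈ I
    · rw [BB, if_pos hiI]
      simp only [hiI, iff_true]
      rw [lowB_val hIp hi]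
      exact rkB_lt_m hIp (mem_prP.mpr (Or.inl ⟨hiI, hi⟩))
    · rw [BB, if_neg hiI]
      by_cases h1 : i.rev ∈ I
      · rw [if_pos h1]
        simp only [hiI, iff_false]
        rw [rev_val]
        have := lowB_lt hIp hi
        have := card_le_n hIp
        have := (lowB I i).isLt
        omega
      · rw [if_neg h1]
        simp only [hiI, iff_false]
        rw [lowB_val hIp hi]
        have hni : i ∉ I.image pr := by
          intro hmem
          rcases mem_prP.mp hmem with ⟨h, _⟩ | ⟨h, _⟩
          · exact hiI h
          · exact h1 h
        have := rkB_ge_m (I := I) hni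
        omega
  · simp only [fB]
    rw [if_neg hi]
    have hj : ((i.rev : Fin (2*n)) : ℕ) < n := rev_lt i hi
    by_cases h1 : i.rev ∈ I
    · rw [BB, if_pos h1]
      have hiI : i ∉ I := fun hiI => hIp i.rev ⟨h1, by rwa [Fin.rev_rev]⟩
      simp only [hiI, iff_false]
      rw [rev_val]
      have := lowB_lt hIp hj
      have := card_le_n hIp
      have := (lowB I i.rev).isLt
      omega
    · rw [BB, if_neg h1, Fin.rev_rev]
      by_cases h2 : i ∈ I
      · rw [if_pos h2, Fin.rev_rev]
        simp only [h2, iff_true]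
        rw [lowB_val hIp hj]
        exact rkB_lt_m hIp (mem_prP.mpr (Or.inr ⟨by rwa [Fin.rev_rev], hj⟩))
      · rw [if_neg h2]
        simp only [h2, iff_false]
        rw [rev_val]
        have := lowB_lt hIp hj
        have := card_le_n hIp
        omega

include hIp in
lemma exists_wb : ∃ u : Equiv.Perm (Fin (2*n)),
    (∀ i, u i.rev = (u i).rev) ∧ ∀ i, ((u i : ℕ) < I.card ↔ i ∈ I) := by
  have hbij : Function.Bijective (fB I) :=
    Finite.injective_iff_bijective.mp (fB_inj hIp)
  exact ⟨Equiv.ofBijective _ hbij, fun i => fB_rev i, fun i => fB_mem hIp i⟩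

end ConstrLemmas

lemma not_iff_cases {A B C D : Prop} (h : ¬((A ↔ B) ∧ (C ↔ D))) :
    (A ∧ ¬B) ∨ (B ∧ ¬A) ∨ (C ∧ ¬D) ∨ (D ∧ ¬C) := by tauto

lemma cond_cases {A B C D : Prop} (h : ¬((A ∧ ¬B) ∨ (D ∧ ¬C))) :
    ((A ↔ B) ∧ (C ↔ D)) ∨ ((B ∧ ¬A) ∨ (C ∧ ¬D)) := by tauto

lemma cond_cases2 {A C : Prop} (h : ¬(A ∧ ¬C)) : (A ↔ C) ∨ (C ∧ ¬A) := by tauto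

lemma image_perm_eq_iff (σ : Equiv.Perm (Fin (2*n))) (I : Finset (Fin (2*n))) :
    I.image σ = I ↔ ∀ i, σ i ∈ I ↔ i ∈ I := by
  classical
  constructor
  · intro h i
    constructor
    · intro hσ
      rw [← h] at hσ
      obtain ⟨j, hj, hji⟩ := Finset.mem_image.mp hσ
      rwa [← σ.injective hji]
    · intro hi; rw [← h]; exact Finset.mem_image_of_mem _ hi
  · intro h
    apply Finset.eq_of_subset_of_card_le
    · intro j hj; obtain ⟨i, hi, rfl⟩ := Finset.mem_image.mp hj; exact (h i).mpr hi
    · rw [Finset.card_image_of_injective _ σ.injective]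

lemma image_eq_filter {I : Finset (Fin (2*n))} (u : Equiv.Perm (Fin (2*n)))
    (humem : ∀ i, ((u i : ℕ) < I.card ↔ i ∈ I)) :
    I.image u = Finset.univ.filter (fun i : Fin (2*n) => (i:ℕ) < I.card) := by
  classical
  apply Finset.eq_of_subset_of_card_le
  · intro j hj
    obtain ⟨i, hi, rfl⟩ := Finset.mem_image.mp hj
    simp only [Finset.mem_filter, Finset.mem_univ, true_and]
    exact (humem i).mpr hi
  · rw [Finset.card_image_of_injective _ u.injective,
      card_filter_lt I.card (by simpa using Finset.card_le_univ I)]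

lemma vertex_FB {a : Fin (2*n) → ℝ} {I : Finset (Fin (2*n))} (u : Equiv.Perm (Fin (2*n)))
    (hu : u ∈ WB n)
    (himg : I.image u = Finset.univ.filter (fun i : Fin (2*n) => (i:ℕ) < I.card)) :
    ptB n a u ∈ FB n a I := by
  classical
  constructor
  · exact subset_convexHull ℝ _ ⟨u, hu, rfl⟩
  · show ∑ i ∈ I, a (u i) = _
    rw [← himg, Finset.sum_image (fun x _ y _ hxy => u.injective hxy)]

end Aux
end WeightB


set_option maxHeartbeats 2000000 in
open WeightB in
/-- Proposition B.2: position of the facets of `P_{B_n}` relative to the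
reflecting hyperplanes. -/
theorem statement16 (n : ℕ) (hn : 2 ≤ n) (a : Fin (2 * n) → ℝ) (haE : a ∈ E n)
    (hmono : ∀ i j : Fin (2 * n), (i : ℕ) < (j : ℕ) → (j : ℕ) < n → a i < a j)
    (haneg : ∀ i : Fin (2 * n), (i : ℕ) < n → a i < 0)
    (k : ℕ) (hk : k < n) (I : Finset (Fin (2 * n))) (hI : Signed n I) :
    ((FB n a I ∩ HB n k hk).Nonempty ↔ I.image (sB n k hk) = I) ∧
    (FB n a I ⊆ HBlt n k hk ↔ condB n k hk I) := by
  classical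
  obtain ⟨hIne, hIsgn⟩ := hI
  have hIp : ∀ i : Fin (2*n), ¬(i ∈ I ∧ i.rev ∈ I) := pairFree hIsgn
  have hle : ∀ i j : Fin (2*n), (i:ℕ) ≤ (j:ℕ) → a i ≤ a j := a_mono_le haE hmono haneg
  obtain ⟨u, hu, humem⟩ := exists_wb hIp
  have himgu : I.image u = Finset.univ.filter (fun i : Fin (2*n) => (i:ℕ) < I.card) :=
    image_eq_filter u humem
  have hx0 : ptB n a u ∈ FB n a I := vertex_FB u hu himgu
  by_cases h : k + 1 < n
  · -- case `s_k = (k, k+1)(k̄, \overline{k+1})`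
    set K : Fin (2*n) := ⟨k, by omega⟩ with hKdef
    set K1 : Fin (2*n) := ⟨k+1, by omega⟩ with hK1def
    have hs : sB n k hk = Equiv.swap K K1 * Equiv.swap K.rev K1.rev := by
      simp only [sB]; rw [dif_pos h]
    have hKv : (K:ℕ) = k := rfl
    have hK1v : (K1:ℕ) = k + 1 := rfl
    have hKrv : ((K.rev : Fin (2*n)) : ℕ) = 2*n - (k+1) := rev_val K
    have hK1rv : ((K1.rev : Fin (2*n)) : ℕ) = 2*n - (k+2) := rev_val K1
    have neKK1 : K ≠ K1 := Fin.ne_of_val_ne (by omega)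
    have neKKr : K ≠ K.rev := Fin.ne_of_val_ne (by rw [hKv, hKrv]; omega)
    have neKK1r : K ≠ K1.rev := Fin.ne_of_val_ne (by rw [hKv, hK1rv]; omega)
    have neK1Kr : K1 ≠ K.rev := Fin.ne_of_val_ne (by rw [hK1v, hKrv]; omega)
    have neK1K1r : K1 ≠ K1.rev := Fin.ne_of_val_ne (by rw [hK1v, hK1rv]; omega)
    have neKrK1r : K.rev ≠ K1.rev := fun hh => neKK1 (Fin.rev_injective hh)
    have e1 : sB n k hk K = K1 := by
      rw [hs, Equiv.Perm.mul_apply, Equiv.swap_apply_of_ne_of_ne neKKr neKK1r,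
        Equiv.swap_apply_left]
    have e2 : sB n k hk K1 = K := by
      rw [hs, Equiv.Perm.mul_apply, Equiv.swap_apply_of_ne_of_ne neK1Kr neK1K1r,
        Equiv.swap_apply_right]
    have e3 : sB n k hk K.rev = K1.rev := by
      rw [hs, Equiv.Perm.mul_apply, Equiv.swap_apply_left,
        Equiv.swap_apply_of_ne_of_ne (Ne.symm neKK1r) (Ne.symm neK1K1r)]
    have e4 : sB n k hk K1.rev = K.rev := by
      rw [hs, Equiv.Perm.mul_apply, Equiv.swap_apply_right,
        Equiv.swap_apply_of_ne_of_ne (Ne.symm neKKr) (Ne.symm neK1Kr)]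
    have e5 : ∀ j : Fin (2*n), j ≠ K → j ≠ K1 → j ≠ K.rev → j ≠ K1.rev →
        sB n k hk j = j := by
      intro j h1 h2 h3 h4
      rw [hs, Equiv.Perm.mul_apply, Equiv.swap_apply_of_ne_of_ne h3 h4,
        Equiv.swap_apply_of_ne_of_ne h1 h2]
    have hsW : ∀ i : Fin (2*n), sB n k hk i.rev = (sB n k hk i).rev := by
      intro i
      by_cases h1 : i = K
      · subst h1; rw [e3, e1]
      by_cases h2 : i = K1
      · subst h2; rw [e4, e2]
      by_cases h3 : i = K.rev
      · subst h3; rw [Fin.rev_rev, e1, e3, Fin.rev_rev]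
      by_cases h4 : i = K1.rev
      · subst h4; rw [Fin.rev_rev, e2, e4, Fin.rev_rev]
      · rw [e5 i h1 h2 h3 h4,
          e5 i.rev
            (fun hh => h3 (by rw [← hh, Fin.rev_rev]))
            (fun hh => h4 (by rw [← hh, Fin.rev_rev]))
            (fun hh => h1 (Fin.rev_injective hh))
            (fun hh => h2 (Fin.rev_injective hh))]
    have himg_iff : I.image (sB n k hk) = I ↔
        ((K ∈ I ↔ K1 ∈ I) ∧ (K.rev ∈ I ↔ K1.rev ∈ I)) := by
      rw [image_perm_eq_iff]
      constructor
      · intro hall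
        have h1 := hall K; rw [e1] at h1
        have h2 := hall K.rev; rw [e3] at h2
        exact ⟨h1.symm, h2.symm⟩
      · rintro ⟨c1, c2⟩ i
        by_cases h1 : i = K
        · subst h1; rw [e1]; exact c1.symm
        by_cases h2 : i = K1
        · subst h2; rw [e2]; exact c1
        by_cases h3 : i = K.rev
        · subst h3; rw [e3]; exact c2.symm
        by_cases h4 : i = K1.rev
        · subst h4; rw [e4]; exact c2
        · rw [e5 i h1 h2 h3 h4]
    have hmid : I.image (sB n k hk) = I → ∃ y, y ∈ FB n a I ∧ y ∈ E n ∧ y K = y K1 := by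
      intro himg
      have hv : ∀ i : Fin (2*n), (u * sB n k hk) i.rev = ((u * sB n k hk) i).rev := by
        intro i
        rw [Equiv.Perm.mul_apply, Equiv.Perm.mul_apply, hsW i, hu]
      have himgv : I.image (u * sB n k hk) =
          Finset.univ.filter (fun i : Fin (2*n) => (i:ℕ) < I.card) := by
        rw [Equiv.Perm.coe_mul, ← Finset.image_image, himg, himgu]
      have hq : ptB n a (u * sB n k hk) ∈ FB n a I := vertex_FB _ hv himgv
      refine ⟨(1/2 : ℝ) • ptB n a u + (1/2 : ℝ) • ptB n a (u * sB n k hk), ⟨?_, ?_⟩, ?_, ?_⟩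
      · exact (convex_convexHull ℝ _) hx0.1 hq.1 (by norm_num) (by norm_num) (by norm_num)
      · have h1 := hx0.2
        have h2 := hq.2
        simp only [Pi.add_apply, Pi.smul_apply, smul_eq_mul]
        rw [Finset.sum_add_distrib, ← Finset.mul_sum, ← Finset.mul_sum, h1, h2]
        ring
      · apply PB_subset_E haE
        exact (convex_convexHull ℝ _) hx0.1 hq.1 (by norm_num) (by norm_num) (by norm_num)
      · simp only [Pi.add_apply, Pi.smul_apply, smul_eq_mul, ptB]
        rw [Equiv.Perm.mul_apply, Equiv.Perm.mul_apply, e1, e2]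
        ring
    constructor
    · constructor
      · rintro ⟨x, hxF, hxH⟩
        rw [himg_iff]
        have hxeq : x K = x K1 := by
          have h2 := hxH
          simp only [HB] at h2
          rw [dif_pos h] at h2
          exact h2.2
        by_contra hC
        rcases not_iff_cases hC with ⟨h1, h2⟩ | ⟨h1, h2⟩ | ⟨h1, h2⟩ | ⟨h1, h2⟩
        · have := helper_lt hn haE hmono haneg hIp hIne hxF (i := K) (j := K1)
            (Or.inl ⟨h1, h2⟩)
          linarith
        · have := helper_lt hn haE hmono haneg hIp hIne hxF (i := K1) (j := K)
            (Or.inl ⟨h1, h2⟩)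
          linarith
        · have := helper_lt hn haE hmono haneg hIp hIne hxF (i := K1) (j := K)
            (Or.inr ⟨h1, h2⟩)
          linarith
        · have := helper_lt hn haE hmono haneg hIp hIne hxF (i := K) (j := K1)
            (Or.inr ⟨h1, h2⟩)
          linarith
      · intro himg
        obtain ⟨y, hyF, hyE, hyeq⟩ := hmid himg
        refine ⟨y, hyF, ?_⟩
        simp only [HB]
        rw [dif_pos h]
        exact ⟨hyE, hyeq⟩
    · constructor
      · intro hsub
        have hx0lt : ptB n a u K < ptB n a u K1 := by
          have h2 := hsub hx0
          simp only [HBlt] at h2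
          rw [dif_pos h] at h2
          exact h2.2
        simp only [condB]
        rw [dif_pos h]
        show (K ∈ I ∧ K1 ∉ I) ∨ (K1.rev ∈ I ∧ K.rev ∉ I)
        by_contra hc
        rcases cond_cases hc with hiffs | hmir
        · obtain ⟨y, hyF, hyE, hyeq⟩ := hmid (himg_iff.mpr hiffs)
          have h2 := hsub hyF
          simp only [HBlt] at h2
          rw [dif_pos h] at h2
          have : y K < y K1 := h2.2
          linarith
        · rcases hmir with ⟨h1, h2⟩ | ⟨h1, h2⟩
          · have := helper_lt hn haE hmono haneg hIp hIne hx0 (i := K1) (j := K)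
              (Or.inl ⟨h1, h2⟩)
            linarith
          · have := helper_lt hn haE hmono haneg hIp hIne hx0 (i := K1) (j := K)
              (Or.inr ⟨h1, h2⟩)
            linarith
      · intro hcond x hx
        have hc' : (K ∈ I ∧ K1 ∉ I) ∨ (K1.rev ∈ I ∧ K.rev ∉ I) := by
          have h2 := hcond
          simp only [condB] at h2
          rw [dif_pos h] at h2
          exact h2
        simp only [HBlt]
        rw [dif_pos h]
        exact ⟨PB_subset_E haE hx.1,
          helper_lt hn haE hmono haneg hIp hIne hx (i := K) (j := K1) hc'⟩
  · -- case `s_k = (n-1, \overline{n-1})`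
    set K : Fin (2*n) := ⟨k, by omega⟩ with hKdef
    have hs : sB n k hk = Equiv.swap K K.rev := by
      simp only [sB]; rw [dif_neg h]
    have e1 : sB n k hk K = K.rev := by rw [hs, Equiv.swap_apply_left]
    have e2 : sB n k hk K.rev = K := by rw [hs, Equiv.swap_apply_right]
    have e5 : ∀ j : Fin (2*n), j ≠ K → j ≠ K.rev → sB n k hk j = j := by
      intro j h1 h2
      rw [hs, Equiv.swap_apply_of_ne_of_ne h1 h2]
    have hsW : ∀ i : Fin (2*n), sB n k hk i.rev = (sB n k hk i).rev := by
      intro i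
      by_cases h1 : i = K
      · subst h1; rw [e2, e1, Fin.rev_rev]
      by_cases h2 : i = K.rev
      · subst h2; rw [Fin.rev_rev, e1, e2]
      · rw [e5 i h1 h2,
          e5 i.rev
            (fun hh => h2 (by rw [← hh, Fin.rev_rev]))
            (fun hh => h1 (Fin.rev_injective hh))]
    have himg_iff : I.image (sB n k hk) = I ↔ (K ∈ I ↔ K.rev ∈ I) := by
      rw [image_perm_eq_iff]
      constructor
      · intro hall
        have h1 := hall K; rw [e1] at h1
        exact h1.symm
      · intro c i
        by_cases h1 : i = K
        · subst h1; rw [e1]; exact c.symm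
        by_cases h2 : i = K.rev
        · subst h2; rw [e2]; exact c
        · rw [e5 i h1 h2]
    have hmid : I.image (sB n k hk) = I → ∃ y, y ∈ FB n a I ∧ y ∈ E n ∧ y K = 0 := by
      intro himg
      have hv : ∀ i : Fin (2*n), (u * sB n k hk) i.rev = ((u * sB n k hk) i).rev := by
        intro i
        rw [Equiv.Perm.mul_apply, Equiv.Perm.mul_apply, hsW i, hu]
      have himgv : I.image (u * sB n k hk) =
          Finset.univ.filter (fun i : Fin (2*n) => (i:ℕ) < I.card) := by
        rw [Equiv.Perm.coe_mul, ← Finset.image_image, himg, himgu]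
      have hq : ptB n a (u * sB n k hk) ∈ FB n a I := vertex_FB _ hv himgv
      refine ⟨(1/2 : ℝ) • ptB n a u + (1/2 : ℝ) • ptB n a (u * sB n k hk), ⟨?_, ?_⟩, ?_, ?_⟩
      · exact (convex_convexHull ℝ _) hx0.1 hq.1 (by norm_num) (by norm_num) (by norm_num)
      · have h1 := hx0.2
        have h2 := hq.2
        simp only [Pi.add_apply, Pi.smul_apply, smul_eq_mul]
        rw [Finset.sum_add_distrib, ← Finset.mul_sum, ← Finset.mul_sum, h1, h2]
        ring
      · apply PB_subset_E haE
        exact (convex_convexHull ℝ _) hx0.1 hq.1 (by norm_num) (by norm_num) (by norm_num)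
      · simp only [Pi.add_apply, Pi.smul_apply, smul_eq_mul, ptB]
        rw [Equiv.Perm.mul_apply, e1, hu K]
        have := pair_sum haE (u K)
        linarith
    have hmn : I.card ≤ n := card_le_n hIp
    have hm1 : 1 ≤ I.card := Finset.card_pos.mpr hIne
    have hc1 : I.card - 1 < 2*n := by omega
    have ham1 : a ⟨I.card - 1, hc1⟩ < 0 := haneg _ (show I.card - 1 < n by omega)
    have hneg : ∀ {x : Fin (2*n) → ℝ}, x ∈ FB n a I → K ∈ I → x K < 0 := by
      intro x hx hKI
      have h1 := coord_le hle hIp hIne hx hKI hc1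
      linarith
    have hpos : ∀ {x : Fin (2*n) → ℝ}, x ∈ FB n a I → K.rev ∈ I → 0 < x K := by
      intro x hx hKr
      have h1 := coord_le hle hIp hIne hx hKr hc1
      have h2 := pair_sum (PB_subset_E haE hx.1) K
      linarith
    constructor
    · constructor
      · rintro ⟨x, hxF, hxH⟩
        rw [himg_iff]
        have hxeq : x K = 0 := by
          have h2 := hxH
          simp only [HB] at h2
          rw [dif_neg h] at h2
          exact h2.2
        constructor
        · intro hKI
          exact absurd (hneg hxF hKI) (by rw [hxeq]; exact lt_irrefl 0)
        · intro hKr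
          exact absurd (hpos hxF hKr) (by rw [hxeq]; exact lt_irrefl 0)
      · intro himg
        obtain ⟨y, hyF, hyE, hyeq⟩ := hmid himg
        refine ⟨y, hyF, ?_⟩
        simp only [HB]
        rw [dif_neg h]
        exact ⟨hyE, hyeq⟩
    · constructor
      · intro hsub
        have hx0lt : ptB n a u K < 0 := by
          have h2 := hsub hx0
          simp only [HBlt] at h2
          rw [dif_neg h] at h2
          exact h2.2
        simp only [condB]
        rw [dif_neg h]
        show K ∈ I ∧ K.rev ∉ I
        by_contra hc
        rcases cond_cases2 hc with hiffs | ⟨h1, h2⟩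
        · obtain ⟨y, hyF, hyE, hyeq⟩ := hmid (himg_iff.mpr hiffs)
          have h2 := hsub hyF
          simp only [HBlt] at h2
          rw [dif_neg h] at h2
          have : y K < 0 := h2.2
          linarith
        · have := hpos hx0 h1
          linarith
      · intro hcond x hx
        have hc' : K ∈ I ∧ K.rev ∉ I := by
          have h2 := hcond
          simp only [condB] at h2
          rw [dif_neg h] at h2
          exact h2
        simp only [HBlt]
        rw [dif_neg h]
        exact ⟨PB_subset_E haE hx.1, hneg hx hc'.1⟩
end
end

section
/- Lemma B.3 (vanishing of coefficients, type B): Let K ⊆ [n], I ∈ 𝔉_{B_n}(K), v ∈ W_K, k ∈ K, and let N be the W_K-orbit of k in {1,…,2n}, N̄ = {j̄ : j ∈ N}. Then c_k(I,v) = 0 in each of the following cases: (1) N ⊆ [n] (which forces k ≠ n), and both (v(I)∩N ⊆ [k]∩N or v(I)∩N ⊇ [k]∩N) and (v(I)∩N̄ ⊆ \widehat{[k+1]}∩N̄ or v(I)∩N̄ ⊇ \widehat{[k+1]}∩N̄); (2) N = N̄, and v(I)∩N ⊆ [k]∩N or v(I)∩N ⊇ [k]∩N. -/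
/-!
Type `B_n` setup.  Coordinates are 0-indexed: the paper's index
`i ∈ {1, …, 2n}` corresponds to `i - 1 : Fin (2*n)`, and the bar involution
`ī = 2n + 1 − i` corresponds to `Fin.rev`.
-/

noncomputable section

namespace WeightB

/-- The parabolic subgroup `W_K ≤ W_{B_n}` generated by `{s_k : k ∈ K}`. -/
def WKB (n : ℕ) (K : Finset ℕ) (hK : ∀ k ∈ K, k < n) :
    Subgroup (Equiv.Perm (Fin (2 * n))) :=
  Subgroup.closure {σ | ∃ k, ∃ hk : k ∈ K, σ = sB n k (hK k hk)}

/-- The lower-subset condition defining `𝔉_{B_n}(K)`: on each `W_K`-orbit the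
set `I` is a lower subset for the order `1 < ⋯ < n < n̄ < ⋯ < 1̄`, which is the
natural order of `Fin (2n)` under `ī = 2n + 1 − i`. -/
def lowerB (n : ℕ) (K : Finset ℕ) (hK : ∀ k ∈ K, k < n)
    (I : Finset (Fin (2 * n))) : Prop :=
  ∀ (j : ℕ) (hj : j + 1 < 2 * n),
    (∃ w ∈ WKB n K hK, w ⟨j, by omega⟩ = (⟨j + 1, hj⟩ : Fin (2 * n))) →
    (⟨j + 1, hj⟩ : Fin (2 * n)) ∈ I → (⟨j, by omega⟩ : Fin (2 * n)) ∈ I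

/-- `e_J ∈ ℝ^n` for a signed subset `J`: the `j`-th coordinate is `1` if
`j ∈ J`, `−1` if `j̄ ∈ J`, and `0` otherwise. -/
def eSigned (n : ℕ) (J : Finset (Fin (2 * n))) : Fin n → ℝ := fun j =>
  if (⟨(j : ℕ), by have := j.2; omega⟩ : Fin (2 * n)) ∈ J then 1
  else if Fin.rev (⟨(j : ℕ), by have := j.2; omega⟩ : Fin (2 * n)) ∈ J then -1
  else 0

/-- The simple coroots of type `B_n` (0-indexed): `α_k^∨ = e_k − e_{k+1}` for
`k + 1 < n` and `α_{n-1}^∨ = 2 e_{n-1}` (the paper's `α_n^∨ = 2 e_n`). -/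
def corootB (n : ℕ) (k : Fin n) : Fin n → ℝ :=
  if h : (k : ℕ) + 1 < n then
    fun j => if j = k then 1 else if (j : ℕ) = (k : ℕ) + 1 then -1 else 0
  else fun j => if j = k then 2 else 0

/-- The `W_K`-orbit `N` of (the paper's) `k ∈ [n]` inside `{1, …, 2n}`. -/
def NB (n : ℕ) (K : Finset ℕ) (hK : ∀ k ∈ K, k < n) (k : ℕ) (hk : k < n) :
    Set (Fin (2 * n)) :=
  {j | ∃ w ∈ WKB n K hK, w ⟨k, by omega⟩ = j}

end WeightB

namespace B3
open WeightB Equiv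

variable {n : ℕ}

lemma rev_ne (x : Fin (2 * n)) [NeZero n] : x.rev ≠ x := by
  intro h
  have := congrArg Fin.val h
  have hx := x.isLt
  have hn := NeZero.pos n
  simp [Fin.val_rev] at this
  omega

lemma swap_rev_comm (a b : Fin (2 * n)) (hn : 0 < n) :
    Commute (Equiv.swap a b) (Equiv.swap a.rev b.rev) := by
  have : NeZero n := ⟨by omega⟩
  rcases eq_or_ne a b with rfl | hab
  · simp [Commute, SemiconjBy]
  rcases eq_or_ne b a.rev with rfl | hba
  · rw [Fin.rev_rev]
    rw [Equiv.swap_comm a.rev a]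
  · have h1 : a ≠ a.rev := (rev_ne a).symm
    have h2 : b ≠ b.rev := (rev_ne b).symm
    have h3 : a ≠ b.rev := by
      intro h; apply hba; rw [h, Fin.rev_rev]
    apply Equiv.Perm.Disjoint.commute
    rw [Equiv.Perm.disjoint_iff_eq_or_eq]
    intro x
    by_cases hx : x = a ∨ x = b
    · right
      rcases hx with rfl | rfl
      · exact Equiv.swap_apply_of_ne_of_ne h1 h3
      · exact Equiv.swap_apply_of_ne_of_ne (fun h => hba h) h2
    · push_neg at hx
      left; exact Equiv.swap_apply_of_ne_of_ne hx.1 hx.2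

lemma swap_rev_apply_rev (a b x : Fin (2 * n)) :
    Equiv.swap a.rev b.rev x.rev = (Equiv.swap a b x).rev := by
  rcases eq_or_ne x a with rfl | hxa
  · simp
  rcases eq_or_ne x b with rfl | hxb
  · simp
  · rw [Equiv.swap_apply_of_ne_of_ne hxa hxb,
      Equiv.swap_apply_of_ne_of_ne (fun h => hxa (Fin.rev_injective h))
        (fun h => hxb (Fin.rev_injective h))]

lemma swap_rev_apply_rev' (a b x : Fin (2 * n)) :
    Equiv.swap a b x.rev = (Equiv.swap a.rev b.rev x).rev := by
  have := swap_rev_apply_rev a.rev b.rev x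
  rwa [Fin.rev_rev, Fin.rev_rev] at this

lemma sB_rev (k : ℕ) (hk : k < n) (i : Fin (2 * n)) :
    sB n k hk i.rev = (sB n k hk i).rev := by
  have hn : 0 < n := by omega
  unfold sB
  split
  · next h =>
    set a : Fin (2 * n) := ⟨k, by omega⟩
    set b : Fin (2 * n) := ⟨k + 1, by omega⟩
    have hcomm := swap_rev_comm a b hn
    have hpt : Equiv.swap a b (Equiv.swap a.rev b.rev i)
        = Equiv.swap a.rev b.rev (Equiv.swap a b i) := by
      have := congrArg (fun (σ : Equiv.Perm (Fin (2*n))) => σ i) hcomm.eq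
      simpa using this
    calc (Equiv.swap a b * Equiv.swap a.rev b.rev) i.rev
        = Equiv.swap a b ((Equiv.swap a b i).rev) := by
          rw [Equiv.Perm.mul_apply, swap_rev_apply_rev]
      _ = (Equiv.swap a.rev b.rev (Equiv.swap a b i)).rev := by
          rw [swap_rev_apply_rev']
      _ = ((Equiv.swap a b * Equiv.swap a.rev b.rev) i).rev := by
          rw [Equiv.Perm.mul_apply, hpt]
  · next h =>
    set a : Fin (2 * n) := ⟨k, by omega⟩
    rw [swap_rev_apply_rev', Fin.rev_rev, Equiv.swap_comm]

lemma wkb_rev {K : Finset ℕ} {hK : ∀ k ∈ K, k < n} {w : Equiv.Perm (Fin (2 * n))}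
    (hw : w ∈ WKB n K hK) (i : Fin (2 * n)) : w i.rev = (w i).rev := by
  induction hw using Subgroup.closure_induction generalizing i with
  | mem x hx =>
    obtain ⟨k, hk, rfl⟩ := hx
    exact sB_rev k (hK k hk) i
  | one => simp
  | mul x y hx hy ihx ihy => simp only [Equiv.Perm.mul_apply]; rw [ihy, ihx]
  | inv x hx ih =>
    apply x.injective
    rw [Equiv.Perm.inv_def, Equiv.apply_symm_apply, ih, Equiv.apply_symm_apply]


variable {K : Finset ℕ} {hK : ∀ k ∈ K, k < n}

/-- orbit relation -/
def orb (n : ℕ) (K : Finset ℕ) (hK : ∀ k ∈ K, k < n) (x y : Fin (2 * n)) : Prop :=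
  ∃ w ∈ WKB n K hK, w x = y

lemma orb_refl (x : Fin (2 * n)) : orb n K hK x x := ⟨1, one_mem _, rfl⟩

lemma orb_symm {x y : Fin (2 * n)} (h : orb n K hK x y) : orb n K hK y x := by
  obtain ⟨w, hw, rfl⟩ := h
  exact ⟨w⁻¹, inv_mem hw, w.symm_apply_apply x⟩

lemma orb_trans {x y z : Fin (2 * n)} (h1 : orb n K hK x y) (h2 : orb n K hK y z) :
    orb n K hK x z := by
  obtain ⟨w, hw, rfl⟩ := h1
  obtain ⟨u, hu, rfl⟩ := h2
  exact ⟨u * w, mul_mem hu hw, rfl⟩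

lemma orb_rev {x y : Fin (2 * n)} (h : orb n K hK x y) : orb n K hK x.rev y.rev := by
  obtain ⟨w, hw, rfl⟩ := h
  exact ⟨w, hw, wkb_rev hw x⟩

lemma sB_adj (k : ℕ) (hk : k < n) (x : Fin (2 * n)) :
    sB n k hk x = x ∨ ((sB n k hk x) : ℕ) = (x : ℕ) + 1 ∨ (x : ℕ) = ((sB n k hk x) : ℕ) + 1 := by
  unfold sB
  split
  · next h =>
    set a : Fin (2 * n) := ⟨k, by omega⟩ with ha
    set b : Fin (2 * n) := ⟨k + 1, by omega⟩ with hb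
    have hvala : (a : ℕ) = k := rfl
    have hvalb : (b : ℕ) = k + 1 := rfl
    have hvalar : (a.rev : ℕ) = 2 * n - 1 - k := by
      rw [Fin.val_rev]; omega
    have hvalbr : (b.rev : ℕ) = 2 * n - 2 - k := by
      rw [Fin.val_rev]; omega
    have har : a ≠ a.rev := by intro hh; have := congrArg Fin.val hh; omega
    have hbr : b ≠ b.rev := by intro hh; have := congrArg Fin.val hh; omega
    have habr : a ≠ b.rev := by intro hh; have := congrArg Fin.val hh; omega
    have hbar : b ≠ a.rev := by intro hh; have := congrArg Fin.val hh; omega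
    rcases eq_or_ne x a with rfl | hxa
    · rw [Equiv.Perm.mul_apply, Equiv.swap_apply_of_ne_of_ne har habr,
        Equiv.swap_apply_left]
      right; left; omega
    rcases eq_or_ne x b with rfl | hxb
    · rw [Equiv.Perm.mul_apply, Equiv.swap_apply_of_ne_of_ne hbar hbr,
        Equiv.swap_apply_right]
      right; right; omega
    rcases eq_or_ne x a.rev with rfl | hxar
    · rw [Equiv.Perm.mul_apply, Equiv.swap_apply_left,
        Equiv.swap_apply_of_ne_of_ne (fun hh => habr hh.symm) hbr.symm]
      right; right; omega
    rcases eq_or_ne x b.rev with rfl | hxbr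
    · rw [Equiv.Perm.mul_apply, Equiv.swap_apply_right,
        Equiv.swap_apply_of_ne_of_ne har.symm (fun hh => hbar hh.symm)]
      right; left; omega
    · left
      rw [Equiv.Perm.mul_apply, Equiv.swap_apply_of_ne_of_ne hxar hxbr,
        Equiv.swap_apply_of_ne_of_ne hxa hxb]
  · next h =>
    set a : Fin (2 * n) := ⟨k, by omega⟩ with ha
    have hvala : (a : ℕ) = k := rfl
    have hvalar : (a.rev : ℕ) = 2 * n - 1 - k := by
      rw [Fin.val_rev]; omega
    have hkn : k = n - 1 := by omega
    rcases eq_or_ne x a with rfl | hxa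
    · rw [Equiv.swap_apply_left]; right; left; omega
    rcases eq_or_ne x a.rev with rfl | hxar
    · rw [Equiv.swap_apply_right]; right; right; omega
    · left; exact Equiv.swap_apply_of_ne_of_ne hxa hxar

lemma cross {w : Equiv.Perm (Fin (2 * n))} (hw : w ∈ WKB n K hK)
    (x : Fin (2 * n)) (c : ℕ) (hc : c + 1 < 2 * n)
    (hcr : ((x : ℕ) ≤ c ∧ c < ((w x) : ℕ)) ∨ (((w x) : ℕ) ≤ c ∧ c < (x : ℕ))) :
    orb n K hK x ⟨c, by omega⟩ ∧ orb n K hK x ⟨c + 1, hc⟩ := by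
  induction hw using Subgroup.closure_induction generalizing x with
  | mem σ hσ =>
    obtain ⟨k, hk, rfl⟩ := hσ
    have hmem : sB n k (hK k hk) ∈ WKB n K hK :=
      Subgroup.subset_closure ⟨k, hk, rfl⟩
    rcases sB_adj k (hK k hk) x with heq | hup | hdn
    · rw [heq] at hcr; omega
    · have hx : (x : ℕ) = c := by omega
      have hx' : x = ⟨c, by omega⟩ := by apply Fin.ext; simp; omega
      have hsx : sB n k (hK k hk) x = ⟨c + 1, hc⟩ := by apply Fin.ext; simp; omega
      exact ⟨hx' ▸ orb_refl x, ⟨_, hmem, hsx⟩⟩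
    · have hx : (x : ℕ) = c + 1 := by omega
      have hx' : x = ⟨c + 1, hc⟩ := by apply Fin.ext; simp; omega
      have hsx : sB n k (hK k hk) x = ⟨c, by omega⟩ := by apply Fin.ext; simp; omega
      exact ⟨⟨_, hmem, hsx⟩, hx' ▸ orb_refl x⟩
  | one => simp at hcr; omega
  | mul u t hu ht ihu iht =>
    by_cases hmid : ((x : ℕ) ≤ c ∧ c < ((t x) : ℕ)) ∨ (((t x) : ℕ) ≤ c ∧ c < (x : ℕ))
    · exact iht x hmid
    · have hcr2 : ((t x : ℕ) ≤ c ∧ c < ((u (t x)) : ℕ)) ∨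
          (((u (t x)) : ℕ) ≤ c ∧ c < ((t x) : ℕ)) := by
        simp only [Equiv.Perm.mul_apply] at hcr
        omega
      have h2 := ihu (t x) hcr2
      have hxt : orb n K hK x (t x) := ⟨t, ht, rfl⟩
      exact ⟨orb_trans hxt h2.1, orb_trans hxt h2.2⟩
  | inv u hu ih =>
    have hux : u (u⁻¹ x) = x := u.apply_symm_apply x
    have hcr2 : ((u⁻¹ x : ℕ) ≤ c ∧ c < ((u (u⁻¹ x)) : ℕ)) ∨
        (((u (u⁻¹ x)) : ℕ) ≤ c ∧ c < ((u⁻¹ x) : ℕ)) := by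
      rw [hux]; omega
    have h2 := ih (u⁻¹ x) hcr2
    have hxu : orb n K hK x (u⁻¹ x) := ⟨u⁻¹, inv_mem hu, rfl⟩
    exact ⟨orb_trans hxu h2.1, orb_trans hxu h2.2⟩


lemma dc {I : Finset (Fin (2 * n))} (hIlow : lowerB n K hK I) :
    ∀ x ∈ I, ∀ y : Fin (2 * n), orb n K hK x y → (y : ℕ) ≤ (x : ℕ) → y ∈ I := by
  suffices h : ∀ m : ℕ, ∀ x ∈ I, (x : ℕ) ≤ m → ∀ y : Fin (2 * n),
      orb n K hK x y → (y : ℕ) ≤ (x : ℕ) → y ∈ I by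
    intro x hx y
    exact h (x : ℕ) x hx le_rfl y
  intro m
  induction m with
  | zero =>
    intro x hx hxm y horb hyx
    have : y = x := Fin.ext (by omega)
    rwa [this]
  | succ m ih =>
    intro x hx hxm y horb hyx
    rcases eq_or_lt_of_le hyx with heq | hlt
    · have : y = x := Fin.ext heq
      rwa [this]
    · have hc : (x : ℕ) - 1 + 1 < 2 * n := by have := x.isLt; omega
      obtain ⟨w, hw, hwx⟩ := horb
      have hcr := cross hw x ((x : ℕ) - 1) hc
        (Or.inr ⟨by rw [hwx]; omega, by omega⟩)
      have hx1 : (⟨(x : ℕ) - 1 + 1, hc⟩ : Fin (2 * n)) = x := by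
        apply Fin.ext; simp; omega
      have horbc : orb n K hK ⟨(x : ℕ) - 1, by omega⟩ ⟨(x : ℕ) - 1 + 1, hc⟩ :=
        orb_trans (orb_symm hcr.1) hcr.2
      have hprev : (⟨(x : ℕ) - 1, by omega⟩ : Fin (2 * n)) ∈ I := by
        apply hIlow ((x : ℕ) - 1) hc horbc
        rw [hx1]; exact hx
      exact ih ⟨(x : ℕ) - 1, by omega⟩ hprev (by simp; omega) y
        (orb_trans (orb_symm hcr.1) ⟨w, hw, hwx⟩) (by simp; omega)

lemma card_inter_min {α : Type*} [DecidableEq α] {X C : Finset α}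
    (h : X ⊆ C ∨ C ⊆ X) : (X ∩ C).card = min X.card C.card := by
  rcases h with h | h
  · rw [Finset.inter_eq_left.mpr h, min_eq_left (Finset.card_le_card h)]
  · rw [Finset.inter_eq_right.mpr h, min_eq_right (Finset.card_le_card h)]

lemma card_image_filter {v : Equiv.Perm (Fin (2 * n))} (hv : v ∈ WKB n K hK)
    (I : Finset (Fin (2 * n))) (p : Fin (2 * n) → Prop) [DecidablePred p]
    (hp : ∀ x y, p x → orb n K hK x y → p y) :
    ((I.image v).filter p).card = (I.filter p).card := by
  classical
  rw [Finset.filter_image]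
  rw [Finset.card_image_of_injective _ v.injective]
  congr 1
  apply Finset.filter_congr
  intro x _
  constructor
  · intro h
    exact hp (v x) x h (orb_symm ⟨v, hv, rfl⟩)
  · intro h
    exact hp x (v x) h ⟨v, hv, rfl⟩

lemma sum_eSigned {k : ℕ} (hk : k < n) (J : Finset (Fin (2 * n))) (hJ : Signed n J) :
    ∑ j ∈ Finset.univ.filter (fun j : Fin n => (j : ℕ) ≤ k), eSigned n J j
      = ((J.filter (fun x : Fin (2 * n) => (x : ℕ) ≤ k)).card : ℝ)
        - ((J.filter (fun x : Fin (2 * n) => 2 * n ≤ (x : ℕ) + k + 1)).card : ℝ) := by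
  classical
  have hsplit : ∀ j : Fin n, eSigned n J j
      = (if (⟨(j : ℕ), by have := j.2; omega⟩ : Fin (2 * n)) ∈ J then (1 : ℝ) else 0)
        - (if Fin.rev (⟨(j : ℕ), by have := j.2; omega⟩ : Fin (2 * n)) ∈ J then (1 : ℝ)
            else 0) := by
    intro j
    have := hJ.2 ⟨(j : ℕ), by have := j.2; omega⟩ (by simpa using j.2)
    simp only [eSigned]
    split_ifs with h1 h2 <;> simp_all <;> ring
  rw [Finset.sum_congr rfl (fun j _ => hsplit j), Finset.sum_sub_distrib]
  rw [Finset.sum_boole, Finset.sum_boole]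
  congr 2
  · rw [Finset.filter_filter]
    apply Finset.card_bij (fun (j : Fin n) _ => (⟨(j : ℕ), by have := j.2; omega⟩ : Fin (2 * n)))
    · intro a ha
      simp only [Finset.mem_filter, Finset.mem_univ, true_and] at ha ⊢
      exact ⟨ha.2, ha.1⟩
    · intro a _ b _ hab
      have := congrArg Fin.val hab
      exact Fin.ext this
    · intro x hx
      simp only [Finset.mem_filter] at hx
      have hxn : (x : ℕ) < n := by omega
      refine ⟨⟨(x : ℕ), hxn⟩, ?_, Fin.ext rfl⟩
      simp only [Finset.mem_filter, Finset.mem_univ, true_and]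
      refine ⟨by simpa using hx.2, by simpa using hx.1⟩
  · rw [Finset.filter_filter]
    apply Finset.card_bij
      (fun (j : Fin n) _ => Fin.rev (⟨(j : ℕ), by have := j.2; omega⟩ : Fin (2 * n)))
    · intro a ha
      simp only [Finset.mem_filter, Finset.mem_univ, true_and] at ha ⊢
      refine ⟨ha.2, ?_⟩
      have ha2 := a.2
      simp only [Fin.val_rev]
      show 2 * n ≤ 2 * n - ((a : ℕ) + 1) + k + 1
      omega
    · intro a _ b _ hab
      have := congrArg Fin.val (Fin.rev_injective hab)
      exact Fin.ext this
    · intro x hx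
      simp only [Finset.mem_filter] at hx
      have hxlt := x.isLt
      have hx2 := hx.2
      have hxn : 2 * n - 1 - (x : ℕ) < n := by omega
      refine ⟨⟨2 * n - 1 - (x : ℕ), hxn⟩, ?_, ?_⟩
      · simp only [Finset.mem_filter, Finset.mem_univ, true_and]
        have hrx : Fin.rev (⟨(((⟨2 * n - 1 - (x : ℕ), hxn⟩ : Fin n)) : ℕ), by omega⟩ :
            Fin (2 * n)) = x := by
          apply Fin.ext
          simp only [Fin.val_rev]
          show 2 * n - (2 * n - 1 - (x : ℕ) + 1) = (x : ℕ)
          omega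
        refine ⟨?_, by rw [hrx]; exact hx.1⟩
        show 2 * n - 1 - (x : ℕ) ≤ k
        omega
      · apply Fin.ext
        simp only [Fin.val_rev]
        show 2 * n - (2 * n - 1 - (x : ℕ) + 1) = (x : ℕ)
        omega

lemma coroot_sum (k : ℕ) (hk : k < n) (k' : Fin n) :
    ∑ j ∈ Finset.univ.filter (fun j : Fin n => (j : ℕ) ≤ k), corootB n k' j
      = if k' = ⟨k, hk⟩ then (if k + 1 < n then (1 : ℝ) else 2) else 0 := by
  classical
  unfold corootB
  split
  · next h =>
    have hsum : ∀ j : Fin n, (if j = k' then (1 : ℝ) else if (j : ℕ) = (k' : ℕ) + 1 then -1 else 0)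
        = (if j = k' then (1 : ℝ) else 0) + (if j = ⟨(k' : ℕ) + 1, h⟩ then (-1 : ℝ) else 0) := by
      intro j
      by_cases h1 : j = k'
      · subst h1
        simp [Fin.ext_iff]
      · by_cases h2 : (j : ℕ) = (k' : ℕ) + 1
        · simp [h1, h2, Fin.ext_iff]
        · simp [h1, h2, Fin.ext_iff]
    rw [Finset.sum_congr rfl (fun j _ => hsum j), Finset.sum_add_distrib,
      Finset.sum_ite_eq' _ k' (fun _ => (1 : ℝ)),
      Finset.sum_ite_eq' _ (⟨(k' : ℕ) + 1, h⟩ : Fin n) (fun _ => (-1 : ℝ))]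
    simp only [Finset.mem_filter, Finset.mem_univ, true_and]
    have e1 : ((⟨k, hk⟩ : Fin n) : ℕ) = k := rfl
    have e2 : ((⟨(k' : ℕ) + 1, h⟩ : Fin n) : ℕ) = (k' : ℕ) + 1 := rfl
    simp only [Fin.ext_iff, e1, e2]
    split_ifs <;> first | (exfalso; omega) | norm_num
  · next h =>
    rw [Finset.sum_ite_eq' _ k' (fun _ => (2 : ℝ))]
    simp only [Finset.mem_filter, Finset.mem_univ, true_and]
    have hk' : (k' : ℕ) = n - 1 := by have := k'.2; omega
    have e1 : ((⟨k, hk⟩ : Fin n) : ℕ) = k := rfl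
    simp only [Fin.ext_iff, e1]
    split_ifs <;> first | (exfalso; omega) | norm_num


lemma signed_image {I : Finset (Fin (2 * n))} (hI : Signed n I)
    {v : Equiv.Perm (Fin (2 * n))} (hv : v ∈ WKB n K hK) : Signed n (I.image v) := by
  classical
  constructor
  · exact hI.1.image v
  · intro i hi h
    obtain ⟨h1, h2⟩ := h
    rw [Finset.mem_image] at h1 h2
    obtain ⟨a, ha, rfl⟩ := h1
    obtain ⟨b, hb, hba⟩ := h2
    have hrev : b = a.rev := by
      apply v.injective
      rw [hba, wkb_rev hv a]
    rw [hrev] at hb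
    rcases lt_or_ge (a : ℕ) n with h | h
    · exact hI.2 a h ⟨ha, hb⟩
    · apply hI.2 a.rev (by rw [Fin.val_rev]; have := a.isLt; omega)
      exact ⟨hb, by rw [Fin.rev_rev]; exact ha⟩

lemma card_filter_split {α : Type*} (s : Finset α) (p q : α → Prop)
    [DecidablePred p] [DecidablePred q] :
    (s.filter p).card
      = (s.filter fun x => p x ∧ q x).card + (s.filter fun x => p x ∧ ¬ q x).card := by
  rw [← Finset.filter_filter, ← Finset.filter_filter,
    Finset.card_filter_add_card_filter_not]

lemma filter_and_comm {α : Type*} (s : Finset α) (p q : α → Prop)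
    [DecidablePred p] [DecidablePred q] :
    s.filter (fun x => p x ∧ q x) = s.filter (fun x => q x ∧ p x) := by
  apply Finset.filter_congr
  intro x _
  exact and_comm


lemma filter_inter_univ_filter {α : Type*} [DecidableEq α] [Fintype α] (s : Finset α)
    (p q : α → Prop) [DecidablePred p] [DecidablePred q] :
    s.filter p ∩ Finset.univ.filter (fun x => p x ∧ q x) = s.filter (fun x => p x ∧ q x) := by
  ext x
  simp only [Finset.mem_inter, Finset.mem_filter, Finset.mem_univ, true_and]
  tauto

end B3

set_option maxHeartbeats 2000000 in
open WeightB in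
/-- Lemma B.3 (vanishing of coefficients, type B).  Here `cs` is the coordinate
vector of `e_I − e_{v(I)}` in the basis of simple coroots, and
`c_k(I, v) = cs k`; `[k]` (paper, 1-indexed) is `{i : (i : ℕ) ≤ k}` and
`\widehat{[k+1]}` is `{i : n ≤ (i : ℕ) ∧ (i : ℕ) ≤ 2n − k − 2}` in our 0-indexed
notation. -/
theorem statement17 (n : ℕ) (hn : 2 ≤ n) (K : Finset ℕ) (hK : ∀ k ∈ K, k < n)
    (I : Finset (Fin (2 * n))) (hIsgn : Signed n I) (hIlow : lowerB n K hK I)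
    (v : Equiv.Perm (Fin (2 * n))) (hv : v ∈ WKB n K hK)
    (k : ℕ) (hkK : k ∈ K)
    (cs : Fin n → ℝ)
    (hcs : (fun j => eSigned n I j - eSigned n (I.image v) j) =
      ∑ k' : Fin n, cs k' • corootB n k')
    (hcase :
      -- Case (1): `N ⊆ [n]` (so `k ≠ n` in the paper's notation)
      ((NB n K hK k (hK k hkK) ⊆ {i : Fin (2 * n) | (i : ℕ) < n}) ∧
        ((((I.image v : Finset (Fin (2 * n))) : Set (Fin (2 * n))) ∩
              NB n K hK k (hK k hkK) ⊆
            {i : Fin (2 * n) | (i : ℕ) ≤ k} ∩ NB n K hK k (hK k hkK) ∨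
          {i : Fin (2 * n) | (i : ℕ) ≤ k} ∩ NB n K hK k (hK k hkK) ⊆
            ((I.image v : Finset (Fin (2 * n))) : Set (Fin (2 * n))) ∩
              NB n K hK k (hK k hkK)) ∧
         (((I.image v : Finset (Fin (2 * n))) : Set (Fin (2 * n))) ∩
              (Fin.rev '' NB n K hK k (hK k hkK)) ⊆
            {i : Fin (2 * n) | n ≤ (i : ℕ) ∧ (i : ℕ) ≤ 2 * n - k - 2} ∩
              (Fin.rev '' NB n K hK k (hK k hkK)) ∨
          {i : Fin (2 * n) | n ≤ (i : ℕ) ∧ (i : ℕ) ≤ 2 * n - k - 2} ∩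
              (Fin.rev '' NB n K hK k (hK k hkK)) ⊆
            ((I.image v : Finset (Fin (2 * n))) : Set (Fin (2 * n))) ∩
              (Fin.rev '' NB n K hK k (hK k hkK))))) ∨
      -- Case (2): `N = N̄`
      ((Fin.rev '' NB n K hK k (hK k hkK) = NB n K hK k (hK k hkK)) ∧
        (((I.image v : Finset (Fin (2 * n))) : Set (Fin (2 * n))) ∩
              NB n K hK k (hK k hkK) ⊆
            {i : Fin (2 * n) | (i : ℕ) ≤ k} ∩ NB n K hK k (hK k hkK) ∨
          {i : Fin (2 * n) | (i : ℕ) ≤ k} ∩ NB n K hK k (hK k hkK) ⊆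
            ((I.image v : Finset (Fin (2 * n))) : Set (Fin (2 * n))) ∩
              NB n K hK k (hK k hkK)))) :
    cs ⟨k, hK k hkK⟩ = 0 := by
  classical
  have hk : k < n := hK k hkK
  set kk : Fin (2 * n) := ⟨k, by omega⟩ with hkkdef
  -- membership translations
  have hNmem : ∀ x : Fin (2 * n),
      x ∈ NB n K hK k (hK k hkK) ↔ B3.orb n K hK kk x := fun _ => Iff.rfl
  have hTNmem : ∀ x : Fin (2 * n),
      x ∈ Fin.rev '' NB n K hK k (hK k hkK) ↔ B3.orb n K hK kk x.rev := by
    intro x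
    constructor
    · rintro ⟨y, hy, rfl⟩
      rw [Fin.rev_rev]
      exact (hNmem y).mp hy
    · intro h
      exact ⟨x.rev, (hNmem x.rev).mpr h, Fin.rev_rev x⟩
  have hvsgn : Signed n (I.image v) := B3.signed_image hIsgn hv
  have hdcI : ∀ x ∈ I, ∀ y : Fin (2 * n), B3.orb n K hK x y → (y : ℕ) ≤ (x : ℕ) → y ∈ I :=
    B3.dc hIlow
  -- the common disjunction on the L-side
  have hvIL : (((I.image v : Finset (Fin (2 * n))) : Set (Fin (2 * n))) ∩
        NB n K hK k (hK k hkK) ⊆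
      {i : Fin (2 * n) | (i : ℕ) ≤ k} ∩ NB n K hK k (hK k hkK) ∨
    {i : Fin (2 * n) | (i : ℕ) ≤ k} ∩ NB n K hK k (hK k hkK) ⊆
      ((I.image v : Finset (Fin (2 * n))) : Set (Fin (2 * n))) ∩
        NB n K hK k (hK k hkK)) := by
    rcases hcase with ⟨_, h, _⟩ | ⟨_, h⟩ <;> exact h
  -- Step D : partial sum of the coroot expansion
  have hsumD : ∑ j ∈ Finset.univ.filter (fun j : Fin n => (j : ℕ) ≤ k),
      (eSigned n I j - eSigned n (I.image v) j)
      = (if k + 1 < n then (1 : ℝ) else 2) * cs ⟨k, hK k hkK⟩ := by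
    have hpt : ∀ j : Fin n, eSigned n I j - eSigned n (I.image v) j
        = ∑ k' : Fin n, cs k' * corootB n k' j := by
      intro j
      have := congrFun hcs j
      simpa [Finset.sum_apply] using this
    rw [Finset.sum_congr rfl fun j _ => hpt j, Finset.sum_comm]
    have hinner : ∀ k' : Fin n,
        ∑ j ∈ Finset.univ.filter (fun j : Fin n => (j : ℕ) ≤ k), cs k' * corootB n k' j
        = if k' = ⟨k, hK k hkK⟩ then cs k' * (if k + 1 < n then (1 : ℝ) else 2) else 0 := by
      intro k'
      rw [← Finset.mul_sum, B3.coroot_sum k (hK k hkK) k', mul_ite, mul_zero]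
    rw [Finset.sum_congr rfl fun k' _ => hinner k',
      Finset.sum_ite_eq' Finset.univ (⟨k, hK k hkK⟩ : Fin n)
        (fun k' => cs k' * (if k + 1 < n then (1 : ℝ) else 2))]
    simp [mul_comm]
  -- Step E : the two counting identities
  have hEI := B3.sum_eSigned (n := n) (hK k hkK) I hIsgn
  have hEv := B3.sum_eSigned (n := n) (hK k hkK) (I.image v) hvsgn
  -- the two cardinality identities
  have hL : (I.filter (fun x : Fin (2 * n) => (x : ℕ) ≤ k)).card
      = ((I.image v).filter (fun x : Fin (2 * n) => (x : ℕ) ≤ k)).card := by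
    have hsplitI := B3.card_filter_split I (fun x : Fin (2 * n) => (x : ℕ) ≤ k)
      (fun x => B3.orb n K hK kk x)
    have hsplitv := B3.card_filter_split (I.image v) (fun x : Fin (2 * n) => (x : ℕ) ≤ k)
      (fun x => B3.orb n K hK kk x)
    have hinv : ((I.image v).filter
          (fun x : Fin (2 * n) => (x : ℕ) ≤ k ∧ ¬ B3.orb n K hK kk x)).card
        = (I.filter (fun x : Fin (2 * n) => (x : ℕ) ≤ k ∧ ¬ B3.orb n K hK kk x)).card := by
      apply B3.card_image_filter hv
      rintro x y ⟨hxk, hxN⟩ hxy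
      constructor
      · by_contra hyk
        push_neg at hyk
        obtain ⟨w, hw, hwx⟩ := hxy
        have hcross := B3.cross hw x k (by omega)
          (Or.inl ⟨hxk, by rw [hwx]; omega⟩)
        exact hxN (B3.orb_symm hcross.1)
      · intro hyN
        exact hxN (B3.orb_trans hyN (B3.orb_symm hxy))
    have hNinv : ((I.image v).filter (fun x => B3.orb n K hK kk x)).card
        = (I.filter (fun x => B3.orb n K hK kk x)).card :=
      B3.card_image_filter hv I _ (fun x y hx hxy => B3.orb_trans hx hxy)
    have hIC : I.filter (fun x => B3.orb n K hK kk x) ⊆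
          Finset.univ.filter (fun x : Fin (2 * n) => B3.orb n K hK kk x ∧ (x : ℕ) ≤ k) ∨
        Finset.univ.filter (fun x : Fin (2 * n) => B3.orb n K hK kk x ∧ (x : ℕ) ≤ k) ⊆
          I.filter (fun x => B3.orb n K hK kk x) := by
      by_cases hex : ∃ x ∈ I.filter (fun x => B3.orb n K hK kk x), ¬ ((x : ℕ) ≤ k)
      · right
        intro c hc
        rw [Finset.mem_filter] at hc
        obtain ⟨x, hx, hxk⟩ := hex
        have hx' := Finset.mem_filter.mp hx
        exact Finset.mem_filter.mpr
          ⟨hdcI x hx'.1 c (B3.orb_trans (B3.orb_symm hx'.2) hc.2.1) (by omega), hc.2.1⟩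
      · left
        push_neg at hex
        intro x hx
        have hx' := Finset.mem_filter.mp hx
        rw [Finset.mem_filter]
        exact ⟨Finset.mem_univ x, hx'.2, hex x hx⟩
    have hvC : (I.image v).filter (fun x => B3.orb n K hK kk x) ⊆
          Finset.univ.filter (fun x : Fin (2 * n) => B3.orb n K hK kk x ∧ (x : ℕ) ≤ k) ∨
        Finset.univ.filter (fun x : Fin (2 * n) => B3.orb n K hK kk x ∧ (x : ℕ) ≤ k) ⊆
          (I.image v).filter (fun x => B3.orb n K hK kk x) := by
      rcases hvIL with h | h
      · left
        intro x hx
        have hx' := Finset.mem_filter.mp hx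
        have hmem := h ⟨Finset.mem_coe.mpr hx'.1, (hNmem x).mpr hx'.2⟩
        rw [Finset.mem_filter]
        exact ⟨Finset.mem_univ x, hx'.2, hmem.1⟩
      · right
        intro c hc
        rw [Finset.mem_filter] at hc
        have hmem := h ⟨hc.2.2, (hNmem c).mpr hc.2.1⟩
        exact Finset.mem_filter.mpr ⟨Finset.mem_coe.mp hmem.1, hc.2.1⟩
    have hminI : (I.filter (fun x : Fin (2 * n) => (x : ℕ) ≤ k ∧ B3.orb n K hK kk x)).card
        = min (I.filter (fun x => B3.orb n K hK kk x)).card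
            (Finset.univ.filter
              (fun x : Fin (2 * n) => B3.orb n K hK kk x ∧ (x : ℕ) ≤ k)).card := by
      rw [B3.filter_and_comm I (fun x : Fin (2 * n) => (x : ℕ) ≤ k)
          (fun x => B3.orb n K hK kk x),
        ← B3.filter_inter_univ_filter I (fun x => B3.orb n K hK kk x)
          (fun x : Fin (2 * n) => (x : ℕ) ≤ k)]
      exact B3.card_inter_min hIC
    have hminv : ((I.image v).filter
          (fun x : Fin (2 * n) => (x : ℕ) ≤ k ∧ B3.orb n K hK kk x)).card
        = min ((I.image v).filter (fun x => B3.orb n K hK kk x)).card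
            (Finset.univ.filter
              (fun x : Fin (2 * n) => B3.orb n K hK kk x ∧ (x : ℕ) ≤ k)).card := by
      rw [B3.filter_and_comm (I.image v) (fun x : Fin (2 * n) => (x : ℕ) ≤ k)
          (fun x => B3.orb n K hK kk x),
        ← B3.filter_inter_univ_filter (I.image v) (fun x => B3.orb n K hK kk x)
          (fun x : Fin (2 * n) => (x : ℕ) ≤ k)]
      exact B3.card_inter_min hvC
    omega
  have hT : (I.filter (fun x : Fin (2 * n) => 2 * n ≤ (x : ℕ) + k + 1)).card
      = ((I.image v).filter (fun x : Fin (2 * n) => 2 * n ≤ (x : ℕ) + k + 1)).card := by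
    have hsplitI := B3.card_filter_split I (fun x : Fin (2 * n) => 2 * n ≤ (x : ℕ) + k + 1)
      (fun x => B3.orb n K hK kk x.rev)
    have hsplitv := B3.card_filter_split (I.image v)
      (fun x : Fin (2 * n) => 2 * n ≤ (x : ℕ) + k + 1)
      (fun x => B3.orb n K hK kk x.rev)
    have hinvT : ((I.image v).filter
          (fun x : Fin (2 * n) => 2 * n ≤ (x : ℕ) + k + 1 ∧ ¬ B3.orb n K hK kk x.rev)).card
        = (I.filter
          (fun x : Fin (2 * n) => 2 * n ≤ (x : ℕ) + k + 1 ∧ ¬ B3.orb n K hK kk x.rev)).card := by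
      apply B3.card_image_filter hv
      rintro x y ⟨hxT, hxR⟩ hxy
      have hyT : 2 * n ≤ (y : ℕ) + k + 1 := by
        by_contra hyT
        push_neg at hyT
        obtain ⟨w, hw, hwx⟩ := hxy
        have hcross := B3.cross hw x (2 * n - 2 - k) (by omega)
          (Or.inr ⟨by rw [hwx]; omega, by omega⟩)
        apply hxR
        have h1 : (⟨2 * n - 2 - k + 1, by omega⟩ : Fin (2 * n)) = kk.rev := by
          apply Fin.ext
          simp only [Fin.val_rev]
          show 2 * n - 2 - k + 1 = 2 * n - (k + 1)
          omega
        have h2 := hcross.2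
        rw [h1] at h2
        have h3 := B3.orb_rev h2
        rw [Fin.rev_rev] at h3
        exact B3.orb_symm h3
      refine ⟨hyT, fun hyR => hxR ?_⟩
      exact B3.orb_trans hyR (B3.orb_symm (B3.orb_rev hxy))
    rcases hcase with ⟨hN1, _, hvIT⟩ | ⟨hNsym, hvIL2⟩
    · -- Case 1 : N ⊆ lower half
      have hRn : ∀ x : Fin (2 * n), B3.orb n K hK kk x.rev → n ≤ (x : ℕ) := by
        intro x hx
        have hmem := hN1 ((hNmem x.rev).mpr hx)
        simp only [Set.mem_setOf_eq, Fin.val_rev] at hmem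
        have := x.isLt
        omega
      have hinvR : ((I.image v).filter (fun x => B3.orb n K hK kk x.rev)).card
          = (I.filter (fun x => B3.orb n K hK kk x.rev)).card :=
        B3.card_image_filter hv I _
          (fun x y hx hxy => B3.orb_trans hx (B3.orb_rev hxy))
      have hsplitI' := B3.card_filter_split I (fun x : Fin (2 * n) => B3.orb n K hK kk x.rev)
        (fun x : Fin (2 * n) => 2 * n ≤ (x : ℕ) + k + 1)
      have hsplitv' := B3.card_filter_split (I.image v)
        (fun x : Fin (2 * n) => B3.orb n K hK kk x.rev)
        (fun x : Fin (2 * n) => 2 * n ≤ (x : ℕ) + k + 1)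
      have hcommI : (I.filter (fun x : Fin (2 * n) =>
            2 * n ≤ (x : ℕ) + k + 1 ∧ B3.orb n K hK kk x.rev)).card
          = (I.filter (fun x : Fin (2 * n) =>
            B3.orb n K hK kk x.rev ∧ 2 * n ≤ (x : ℕ) + k + 1)).card := by
        rw [B3.filter_and_comm]
      have hcommv : ((I.image v).filter (fun x : Fin (2 * n) =>
            2 * n ≤ (x : ℕ) + k + 1 ∧ B3.orb n K hK kk x.rev)).card
          = ((I.image v).filter (fun x : Fin (2 * n) =>
            B3.orb n K hK kk x.rev ∧ 2 * n ≤ (x : ℕ) + k + 1)).card := by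
        rw [B3.filter_and_comm]
      have hIC' : I.filter (fun x => B3.orb n K hK kk x.rev) ⊆
            Finset.univ.filter (fun x : Fin (2 * n) =>
              B3.orb n K hK kk x.rev ∧ ¬ (2 * n ≤ (x : ℕ) + k + 1)) ∨
          Finset.univ.filter (fun x : Fin (2 * n) =>
              B3.orb n K hK kk x.rev ∧ ¬ (2 * n ≤ (x : ℕ) + k + 1)) ⊆
            I.filter (fun x => B3.orb n K hK kk x.rev) := by
        by_cases hex : ∃ x ∈ I.filter (fun x => B3.orb n K hK kk x.rev),
            2 * n ≤ (x : ℕ) + k + 1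
        · right
          intro c hc
          rw [Finset.mem_filter] at hc
          obtain ⟨x, hx, hxT⟩ := hex
          have hx' := Finset.mem_filter.mp hx
          have horb : B3.orb n K hK x c := by
            have h1 := B3.orb_trans (B3.orb_symm hx'.2) hc.2.1
            have h2 := B3.orb_rev h1
            rwa [Fin.rev_rev, Fin.rev_rev] at h2
          exact Finset.mem_filter.mpr
            ⟨hdcI x hx'.1 c horb (by omega), hc.2.1⟩
        · left
          push_neg at hex
          intro x hx
          have hx' := Finset.mem_filter.mp hx
          rw [Finset.mem_filter]
          exact ⟨Finset.mem_univ x, hx'.2, by have := hex x hx; omega⟩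
      have hvC' : (I.image v).filter (fun x => B3.orb n K hK kk x.rev) ⊆
            Finset.univ.filter (fun x : Fin (2 * n) =>
              B3.orb n K hK kk x.rev ∧ ¬ (2 * n ≤ (x : ℕ) + k + 1)) ∨
          Finset.univ.filter (fun x : Fin (2 * n) =>
              B3.orb n K hK kk x.rev ∧ ¬ (2 * n ≤ (x : ℕ) + k + 1)) ⊆
            (I.image v).filter (fun x => B3.orb n K hK kk x.rev) := by
        rcases hvIT with h | h
        · left
          intro x hx
          have hx' := Finset.mem_filter.mp hx
          have hmem := h ⟨Finset.mem_coe.mpr hx'.1, (hTNmem x).mpr hx'.2⟩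
          have hb := hmem.1
          simp only [Set.mem_setOf_eq] at hb
          rw [Finset.mem_filter]
          refine ⟨Finset.mem_univ x, hx'.2, ?_⟩
          have hb2 := hb.2
          omega
        · right
          intro c hc
          rw [Finset.mem_filter] at hc
          have hcb : c ∈ {i : Fin (2 * n) | n ≤ (i : ℕ) ∧ (i : ℕ) ≤ 2 * n - k - 2} := by
            simp only [Set.mem_setOf_eq]
            exact ⟨hRn c hc.2.1, by omega⟩
          have hmem := h ⟨hcb, (hTNmem c).mpr hc.2.1⟩
          exact Finset.mem_filter.mpr ⟨Finset.mem_coe.mp hmem.1, hc.2.1⟩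
      have hminI' : (I.filter (fun x : Fin (2 * n) =>
            B3.orb n K hK kk x.rev ∧ ¬ (2 * n ≤ (x : ℕ) + k + 1))).card
          = min (I.filter (fun x => B3.orb n K hK kk x.rev)).card
              (Finset.univ.filter (fun x : Fin (2 * n) =>
                B3.orb n K hK kk x.rev ∧ ¬ (2 * n ≤ (x : ℕ) + k + 1))).card := by
        rw [← B3.filter_inter_univ_filter I (fun x => B3.orb n K hK kk x.rev)
            (fun x : Fin (2 * n) => ¬ (2 * n ≤ (x : ℕ) + k + 1))]
        exact B3.card_inter_min hIC'
      have hminv' : ((I.image v).filter (fun x : Fin (2 * n) =>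
            B3.orb n K hK kk x.rev ∧ ¬ (2 * n ≤ (x : ℕ) + k + 1))).card
          = min ((I.image v).filter (fun x => B3.orb n K hK kk x.rev)).card
              (Finset.univ.filter (fun x : Fin (2 * n) =>
                B3.orb n K hK kk x.rev ∧ ¬ (2 * n ≤ (x : ℕ) + k + 1))).card := by
        rw [← B3.filter_inter_univ_filter (I.image v) (fun x => B3.orb n K hK kk x.rev)
            (fun x : Fin (2 * n) => ¬ (2 * n ≤ (x : ℕ) + k + 1))]
        exact B3.card_inter_min hvC'
      omega
    · -- Case 2 : N = N̄
      have hpRN : ∀ x : Fin (2 * n), B3.orb n K hK kk x.rev → B3.orb n K hK kk x := by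
        intro x h
        have hmem : x ∈ Fin.rev '' NB n K hK k (hK k hkK) :=
          ⟨x.rev, (hNmem x.rev).mpr h, Fin.rev_rev x⟩
        rw [hNsym] at hmem
        exact (hNmem x).mp hmem
      have hTzI : I.filter (fun x : Fin (2 * n) =>
            2 * n ≤ (x : ℕ) + k + 1 ∧ B3.orb n K hK kk x.rev) = ∅ := by
        rw [Finset.filter_eq_empty_iff]
        rintro x hxI ⟨hxT, hxR⟩
        have hxN : B3.orb n K hK kk x := hpRN x hxR
        have horbxr : B3.orb n K hK x x.rev := B3.orb_trans (B3.orb_symm hxN) hxR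
        have hxlt := x.isLt
        have hrevle : (x.rev : ℕ) ≤ (x : ℕ) := by rw [Fin.val_rev]; omega
        have hI2 := hdcI x hxI x.rev horbxr hrevle
        exact hIsgn.2 x.rev (by rw [Fin.val_rev]; omega)
          ⟨hI2, by rw [Fin.rev_rev]; exact hxI⟩
      have hTzv : (I.image v).filter (fun x : Fin (2 * n) =>
            2 * n ≤ (x : ℕ) + k + 1 ∧ B3.orb n K hK kk x.rev) = ∅ := by
        rw [Finset.filter_eq_empty_iff]
        rintro x hxv ⟨hxT, hxR⟩
        have hxlt := x.isLt
        rcases hvIL2 with h | h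
        · have hxN : B3.orb n K hK kk x := hpRN x hxR
          have hmem := h ⟨Finset.mem_coe.mpr hxv, (hNmem x).mpr hxN⟩
          have hb := hmem.1
          simp only [Set.mem_setOf_eq] at hb
          omega
        · have hxrevk : (x.rev : ℕ) ≤ k := by rw [Fin.val_rev]; omega
          have hmem := h ⟨hxrevk, (hNmem x.rev).mpr hxR⟩
          have hxrevv : x.rev ∈ I.image v := Finset.mem_coe.mp hmem.1
          exact hvsgn.2 x.rev (by rw [Fin.val_rev]; omega)
            ⟨hxrevv, by rw [Fin.rev_rev]; exact hxv⟩
      rw [hTzI] at hsplitI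
      rw [hTzv] at hsplitv
      simp only [Finset.card_empty] at hsplitI hsplitv
      omega
  -- conclusion
  have hzero : (if k + 1 < n then (1 : ℝ) else 2) * cs ⟨k, hK k hkK⟩ = 0 := by
    rw [← hsumD, Finset.sum_sub_distrib, hEI, hEv, hL, hT]
    ring
  have hc : (if k + 1 < n then (1 : ℝ) else 2) ≠ 0 := by split_ifs <;> norm_num
  exact (mul_eq_zero.mp hzero).resolve_left hc
end
end
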